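/- arXiv:0706.2484 — 8 statements merged into one kernel-verified Lean document; each statement's English description precedes it below -/
import Mathlib

section
/- Let S be a nonempty set and g : S → S a map such that for every positive integer m the set Fix(g^m) = {x ∈ S : g^m(x) = x} is finite, and let φ(m) denote its cardinality. Then for every positive integer m, Φ₁(m, φ) ≡ 0 (mod m), i.e., m divides Φ₁(m, φ). -/
/-!
Möbius inversion of `φ(n) = ∑_{d ∣ n} #{x | minimalPeriod g x = d}` identifies `Φ₁(m, φ)` with the
number of points of exact period `m`. These points fall into the periodic orbits of `g`, each of
which has exactly `m` elements, so their number is divisible by `m`.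
-/

open scoped Classical

/-- `Phi1 m φ = ∑_{d ∣ m, d squarefree} μ(d) · φ(m/d)`. -/
noncomputable def Phi1 (m : ℕ) (φ : ℕ → ℤ) : ℤ :=
  ∑ d ∈ m.divisors.filter (fun d => Squarefree d),
    (ArithmeticFunction.moebius d) * φ (m / d)

open Finset Function

theorem Finset.dvd_card_of_forall_card_fiber_eq {α β : Type*} [DecidableEq β] {s : Finset α}
    (π : α → β) {n : ℕ} (h : ∀ a ∈ s, #{b ∈ s | π b = π a} = n) : n ∣ #s := by
  rw [card_eq_sum_card_image π s, sum_const_nat fun b hb => ?_]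
  · exact dvd_mul_left _ _
  · obtain ⟨a, ha, rfl⟩ := mem_image.1 hb
    exact h a ha

namespace Cycle

variable {α : Type*} [DecidableEq α]

theorem mem_toFinset {s : Cycle α} {a : α} : a ∈ s.toFinset ↔ a ∈ s := by
  induction s using Quotient.inductionOn' with
  | h l => exact List.mem_toFinset

theorem card_toFinset_of_nodup {s : Cycle α} (h : s.Nodup) : #s.toFinset = s.length := by
  induction s using Quotient.inductionOn' with
  | h l => exact List.toFinset_card_of_nodup h

end Cycle

namespace Function

variable {α : Type*} (f : α → α)

theorem ncard_isPeriodicPt_eq_sum_ncard_minimalPeriod {n : ℕ} (hn : 0 < n)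
    (hfin : {x | f^[n] x = x}.Finite) :
    {x | f^[n] x = x}.ncard = ∑ d ∈ n.divisors, {x | minimalPeriod f x = d}.ncard := by
  rw [Set.ncard_eq_toFinset_card _ hfin, card_eq_sum_card_fiberwise (f := minimalPeriod f)
    (t := n.divisors) fun x hx => ?_]
  · refine sum_congr rfl fun d hd => ?_
    rw [← Set.ncard_coe_finset, coe_filter]
    congr 1
    refine Set.ext fun x => ⟨And.right, fun hx => ⟨hfin.mem_toFinset.2 ?_, hx⟩⟩
    exact isPeriodicPt_iff_minimalPeriod_dvd.2 (hx ▸ Nat.dvd_of_mem_divisors hd)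
  · exact Nat.mem_divisors.2 ⟨IsPeriodicPt.minimalPeriod_dvd (hfin.mem_toFinset.1 hx), hn.ne'⟩

theorem filter_periodicOrbit_eq_toFinset_periodicOrbit {n : ℕ} (hn : 0 < n) {s : Finset α}
    (hs : ∀ x, x ∈ s ↔ minimalPeriod f x = n) {x : α} (hx : x ∈ s) :
    {y ∈ s | periodicOrbit f y = periodicOrbit f x} = (periodicOrbit f x).toFinset := by
  have periodic : ∀ {y}, y ∈ s → y ∈ periodicPts f := fun hy =>
    minimalPeriod_pos_iff_mem_periodicPts.1 ((hs _).1 hy ▸ hn)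
  ext y
  rw [mem_filter, Cycle.mem_toFinset]
  constructor
  · rintro ⟨hy, hyx⟩
    exact hyx ▸ self_mem_periodicOrbit (periodic hy)
  · intro hy
    obtain ⟨k, rfl⟩ := (mem_periodicOrbit_iff (periodic hx)).1 hy
    refine ⟨(hs _).2 ?_, periodicOrbit_apply_iterate_eq (periodic hx) k⟩
    rw [minimalPeriod_apply_iterate (periodic hx), (hs x).1 hx]

theorem dvd_ncard_minimalPeriod_eq {n : ℕ} (hn : 0 < n) :
    n ∣ {x | minimalPeriod f x = n}.ncard := by
  obtain hfin | hinf := Set.finite_or_infinite {x | minimalPeriod f x = n}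
  · have hs : ∀ y, y ∈ hfin.toFinset ↔ minimalPeriod f y = n := fun y => hfin.mem_toFinset
    rw [Set.ncard_eq_toFinset_card _ hfin]
    refine dvd_card_of_forall_card_fiber_eq (periodicOrbit f) fun x hx => ?_
    rw [filter_periodicOrbit_eq_toFinset_periodicOrbit f hn hs hx,
      Cycle.card_toFinset_of_nodup nodup_periodicOrbit, periodicOrbit_length, (hs x).1 hx]
  · rw [hinf.ncard]
    exact dvd_zero n

end Function

theorem Phi1_eq_sum_divisorsAntidiagonal (m : ℕ) (φ : ℕ → ℤ) :
    Phi1 m φ = ∑ x ∈ m.divisorsAntidiagonal, ArithmeticFunction.moebius x.1 * φ x.2 := by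
  rw [Phi1, sum_filter_of_ne fun d _ hd => ?_,
    ← Nat.sum_divisorsAntidiagonal fun d e => ArithmeticFunction.moebius d * φ e]
  by_contra hsq
  exact hd (by rw [ArithmeticFunction.moebius_eq_zero_of_not_squarefree hsq, zero_mul])

theorem statement1_general {S : Type*} (g : S → S)
    (hfin : ∀ m : ℕ, 0 < m → {x : S | g^[m] x = x}.Finite)
    (φ : ℕ → ℤ)
    (hφ : ∀ m : ℕ, 0 < m → φ m = ({x : S | g^[m] x = x}.ncard : ℤ))
    (m : ℕ) (hm : 0 < m) :
    (m : ℤ) ∣ Phi1 m φ := by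
  have hφ_sum : ∀ n > 0, ∑ d ∈ n.divisors, ({x | minimalPeriod g x = d}.ncard : ℤ) = φ n :=
    fun n hn => by
      rw [hφ n hn, ncard_isPeriodicPt_eq_sum_ncard_minimalPeriod g hn (hfin n hn), Nat.cast_sum]
  have hinv := ArithmeticFunction.sum_eq_iff_sum_mul_moebius_eq.1 hφ_sum m hm
  simp only [Int.cast_id] at hinv
  rw [Phi1_eq_sum_divisorsAntidiagonal, hinv]
  exact_mod_cast dvd_ncard_minimalPeriod_eq g hm

/-- If `φ(m)` is the number of fixed points of the `m`-th iterate of `g`, then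
`Φ₁(m, φ) ≡ 0 (mod m)`. -/
theorem statement1 {S : Type*} [Nonempty S] (g : S → S)
    (hfin : ∀ m : ℕ, 0 < m → {x : S | g^[m] x = x}.Finite)
    (φ : ℕ → ℤ)
    (hφ : ∀ m : ℕ, 0 < m → φ m = ({x : S | g^[m] x = x}.ncard : ℤ))
    (m : ℕ) (hm : 0 < m) :
    (m : ℤ) ∣ Phi1 m φ :=
  statement1_general g hfin φ hφ m hm
end

section
/- Let S ⊆ ℝ be a set with 0 ∈ S and −S = S, and let g : S → S be an odd map (g(−x) = −g(x) for all x ∈ S) such that for every positive integer m the set {x ∈ S : g^m(x) = −x} is finite; let ψ(m) denote its cardinality. Then for every positive integer m, the number of symmetric periodic points of g with least period 2m (i.e., periodic points of least period 2m whose orbit O under g satisfies −O = O) equals Φ₂(m, ψ). -/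
open scoped Classical

/-- `Phi2 m ψ = ψ(m) - 1` if `m` is a power of 2, and otherwise
`∑_{d ∣ m, d odd and squarefree} μ(d) · ψ(m/d)`. -/
noncomputable def Phi2 (m : ℕ) (ψ : ℕ → ℤ) : ℤ :=
  if ∃ i : ℕ, m = 2 ^ i then ψ m - 1
  else ∑ d ∈ m.divisors.filter (fun d => Odd d ∧ Squarefree d),
    (ArithmeticFunction.moebius d) * ψ (m / d)

/-!
A point `x ≠ 0` of `S` with `g^[n] x = -x` has least period `2k` for some `k` with
`g^[k] x = -x`, and then `g^[n] x = -x` holds exactly when `n` is an odd multiple of `k`; these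
points are precisely the symmetric periodic points of least period `2k`. Hence, with `s k` the
number of such points and the extra `1` counting the fixed point `0`,
`ψ n - 1 = ∑_{k ∣ n, n/k odd} s k`. For `n = 2^a q` with `q` odd this is a divisor sum over the
divisors of `q`, which Möbius inversion on the odd numbers turns into `Φ₂`; for `q > 1` the
constant `-1` drops out because `∑_{d ∣ q} μ d = 0`.
-/

open Function Set ArithmeticFunction
open scoped ArithmeticFunction.Moebius

namespace Nat

theorem mod_two_mul_eq_self_iff {n k : ℕ} (hk : 0 < k) :
    n % (2 * k) = k ↔ k ∣ n ∧ Odd (n / k) := by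
  rw [mul_comm, Nat.mod_mul, Nat.odd_iff, Nat.dvd_iff_mod_eq_zero]
  have := Nat.mod_lt n hk
  rcases Nat.mod_two_eq_zero_or_one (n / k) with h | h <;> rw [h] <;> omega

theorem filter_odd_divisors_two_pow_mul (a : ℕ) {q : ℕ} (hq : Odd q) :
    (2 ^ a * q).divisors.filter Odd = q.divisors := by
  ext d
  simp only [Finset.mem_filter, Nat.mem_divisors, mul_ne_zero_iff, ne_eq, pow_eq_zero_iff',
    OfNat.ofNat_ne_zero, false_and, not_false_eq_true, true_and]
  constructor
  · rintro ⟨⟨hd, hq0⟩, hdodd⟩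
    exact ⟨((Nat.coprime_two_right.mpr hdodd).pow_right a).dvd_of_dvd_mul_left hd, hq0⟩
  · rintro ⟨hd, hq0⟩
    exact ⟨⟨hd.mul_left _, hq0⟩, hq.of_dvd_nat hd⟩

theorem filter_divisors_odd_div_two_pow_mul (a : ℕ) {q : ℕ} (hq : Odd q) :
    (2 ^ a * q).divisors.filter (fun k => Odd (2 ^ a * q / k))
      = q.divisors.image (2 ^ a * ·) := by
  ext k
  simp only [Finset.mem_filter, Nat.mem_divisors, Finset.mem_image]
  constructor
  · rintro ⟨⟨⟨r, hr⟩, hne⟩, hodd⟩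
    have hk0 : 0 < k := Nat.pos_of_ne_zero (by rintro rfl; simp_all)
    rw [hr, Nat.mul_div_cancel_left _ hk0] at hodd
    obtain ⟨e, rfl⟩ : 2 ^ a ∣ k :=
      ((Nat.coprime_two_left.mpr hodd).pow_left a).dvd_of_dvd_mul_right ⟨q, hr.symm⟩
    refine ⟨e, ⟨⟨r, ?_⟩, (mul_ne_zero_iff.mp hne).2⟩, rfl⟩
    exact Nat.eq_of_mul_eq_mul_left (pow_pos two_pos a) (by rw [hr, mul_assoc])
  · rintro ⟨e, ⟨he, hq0⟩, rfl⟩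
    refine ⟨⟨mul_dvd_mul_left _ he, by positivity⟩, ?_⟩
    rw [Nat.mul_div_mul_left _ _ (pow_pos two_pos a)]
    exact hq.of_dvd_nat (Nat.div_dvd_of_dvd he)

end Nat

theorem sum_divisors_moebius_eq_zero {n : ℕ} (hn : n ≠ 1) : ∑ d ∈ n.divisors, (μ d : ℤ) = 0 := by
  rw [← coe_mul_zeta_apply, moebius_mul_coe_zeta, one_apply_ne hn]

theorem apply_two_pow_mul_eq_sum_moebius_smul {R : Type*} [AddCommGroup R] {s f : ℕ → R}
    (h : ∀ n > 0, ∑ k ∈ n.divisors.filter (fun k => Odd (n / k)), s k = f n)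
    (a : ℕ) {q : ℕ} (hq : Odd q) :
    s (2 ^ a * q) = ∑ d ∈ q.divisors, μ d • f (2 ^ a * (q / d)) := by
  have hodd : ∀ n > 0, n ∈ {n : ℕ | Odd n} → ∑ e ∈ n.divisors, s (2 ^ a * e) = f (2 ^ a * n) := by
    intro n hn hn_odd
    rw [← h _ (by positivity), Nat.filter_divisors_odd_div_two_pow_mul a hn_odd,
      Finset.sum_image fun _ _ _ _ => Nat.eq_of_mul_eq_mul_left (pow_pos two_pos a)]
  rw [← (sum_eq_iff_sum_smul_moebius_eq_on _ fun _ _ hd hn => Odd.of_dvd_nat hn hd).mp hodd q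
    hq.pos hq, Nat.sum_divisorsAntidiagonal fun d e => μ d • f (2 ^ a * e)]

theorem Phi2_two_pow_mul (a : ℕ) {q : ℕ} (hq : Odd q) (ψ : ℕ → ℤ) :
    Phi2 (2 ^ a * q) ψ = ∑ d ∈ q.divisors, μ d * (ψ (2 ^ a * (q / d)) - 1) := by
  have hpow : (∃ i : ℕ, 2 ^ a * q = 2 ^ i) ↔ q = 1 := by
    refine ⟨fun ⟨i, hi⟩ => ?_, fun h => ⟨a, by rw [h, mul_one]⟩⟩
    exact ((Nat.coprime_two_right.mpr hq).pow_right i).eq_one_of_dvd ⟨2 ^ a, by rw [← hi, mul_comm]⟩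
  unfold Phi2
  split_ifs with h
  · simp [hpow.mp h]
  have hq1 : q ≠ 1 := fun h' => h (hpow.mpr h')
  calc ∑ d ∈ (2 ^ a * q).divisors.filter (fun d => Odd d ∧ Squarefree d), μ d * ψ (2 ^ a * q / d)
      = ∑ d ∈ (2 ^ a * q).divisors.filter Odd, μ d * ψ (2 ^ a * q / d) := by
        rw [← Finset.filter_filter]
        exact Finset.sum_filter_of_ne fun d _ hd =>
          moebius_ne_zero_iff_squarefree.mp (left_ne_zero_of_mul hd)
    _ = ∑ d ∈ q.divisors, μ d * ψ (2 ^ a * (q / d)) := by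
        rw [Nat.filter_odd_divisors_two_pow_mul a hq]
        refine Finset.sum_congr rfl fun d hd => ?_
        rw [Nat.mul_div_assoc _ (Nat.dvd_of_mem_divisors hd)]
    _ = ∑ d ∈ q.divisors, μ d * (ψ (2 ^ a * (q / d)) - 1) := by
        simp only [mul_sub, mul_one, Finset.sum_sub_distrib, sum_divisors_moebius_eq_zero hq1,
          sub_zero]

theorem Function.minimalPeriod_eq_iff_of_pos {α : Type*} {f : α → α} {x : α} {n : ℕ}
    (hn : 0 < n) :
    minimalPeriod f x = n ↔ IsPeriodicPt f n x ∧ ∀ j, 0 < j → j < n → ¬IsPeriodicPt f j x := by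
  constructor
  · rintro rfl
    exact ⟨isPeriodicPt_minimalPeriod f x, fun j hj hjn =>
      not_isPeriodicPt_of_pos_of_lt_minimalPeriod hj.ne' hjn⟩
  · rintro ⟨hper, hmin⟩
    have hpos := hper.minimalPeriod_pos hn
    exact (hper.minimalPeriod_le hn).antisymm <| not_lt.mp fun hlt =>
      hmin _ hpos hlt (isPeriodicPt_minimalPeriod f x)

section OddMap

variable {α : Type*}

def iterateNegPts [Neg α] (S : Set α) (g : α → α) (n : ℕ) : Set α :=
  {x | x ∈ S ∧ g^[n] x = -x}

def symmPeriodicPts [Neg α] (S : Set α) (g : α → α) (k : ℕ) : Set α :=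
  {x | x ∈ S ∧ minimalPeriod g x = 2 * k ∧ g^[k] x = -x}

theorem iterate_neg_of_odd [Neg α] {S : Set α} {g : α → α} (hmaps : MapsTo g S S)
    (hodd : ∀ x ∈ S, g (-x) = -g x) (n : ℕ) {x : α} (hx : x ∈ S) :
    g^[n] (-x) = -g^[n] x := by
  induction n generalizing x with
  | zero => rfl
  | succ n ih => rw [iterate_succ_apply, iterate_succ_apply, hodd x hx, ih (hmaps hx)]

theorem isPeriodicPt_two_mul_of_iterate_eq_neg [InvolutiveNeg α] {S : Set α} {g : α → α}
    (hmaps : MapsTo g S S) (hodd : ∀ x ∈ S, g (-x) = -g x) {x : α} (hx : x ∈ S) {n : ℕ}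
    (hn : g^[n] x = -x) : IsPeriodicPt g (2 * n) x := by
  rw [IsPeriodicPt, IsFixedPt, two_mul, iterate_add_apply, hn, iterate_neg_of_odd hmaps hodd n hx,
    hn, neg_neg]

variable [AddGroup α] [IsAddTorsionFree α] {S : Set α} {g : α → α}

theorem pos_of_iterate_eq_neg {x : α} (hx0 : x ≠ 0) {n : ℕ} (hn : g^[n] x = -x) : 0 < n :=
  Nat.pos_of_ne_zero fun h => hx0 <| neg_eq_self.mp (h ▸ hn).symm

theorem map_zero_of_odd (h0 : (0 : α) ∈ S) (hodd : ∀ x ∈ S, g (-x) = -g x) : g 0 = 0 := by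
  have h := hodd 0 h0
  rwa [neg_zero, eq_comm, neg_eq_self] at h

theorem minimalPeriod_zero_eq_one (h0 : (0 : α) ∈ S) (hodd : ∀ x ∈ S, g (-x) = -g x) :
    minimalPeriod g 0 = 1 :=
  minimalPeriod_eq_one_iff_isFixedPt.mpr (map_zero_of_odd h0 hodd)

theorem ne_zero_of_mem_symmPeriodicPts (h0 : (0 : α) ∈ S) (hodd : ∀ x ∈ S, g (-x) = -g x)
    {k : ℕ} {x : α} (hx : x ∈ symmPeriodicPts S g k) : x ≠ 0 := by
  rintro rfl
  have := hx.2.1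
  rw [minimalPeriod_zero_eq_one h0 hodd] at this
  omega

theorem two_mul_eq_minimalPeriod (hmaps : MapsTo g S S) (hodd : ∀ x ∈ S, g (-x) = -g x)
    {x : α} (hx : x ∈ S) (hx0 : x ≠ 0) {n : ℕ} (hn : g^[n] x = -x)
    (hlt : n < minimalPeriod g x) : 2 * n = minimalPeriod g x := by
  have hn0 := pos_of_iterate_eq_neg hx0 hn
  -- the minimal period divides `2 * n`, which is positive and less than twice the period
  obtain ⟨c, hc⟩ := (isPeriodicPt_two_mul_of_iterate_eq_neg hmaps hodd hx hn).minimalPeriod_dvd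
  rcases c with _ | _ | c <;> nlinarith

theorem exists_mem_symmPeriodicPts (hmaps : MapsTo g S S) (hodd : ∀ x ∈ S, g (-x) = -g x)
    {x : α} (hx : x ∈ S) (hx0 : x ≠ 0) {n : ℕ} (hn : g^[n] x = -x) :
    ∃ k, x ∈ symmPeriodicPts S g k := by
  have hpos := (isPeriodicPt_two_mul_of_iterate_eq_neg hmaps hodd hx hn).minimalPeriod_pos
    (by linarith [pos_of_iterate_eq_neg hx0 hn])
  have hmod : g^[n % minimalPeriod g x] x = -x := by rw [iterate_mod_minimalPeriod_eq, hn]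
  exact ⟨_, hx, (two_mul_eq_minimalPeriod hmaps hodd hx hx0 hmod (Nat.mod_lt n hpos)).symm, hmod⟩

theorem iterate_eq_neg_iff_dvd_and_odd_div (h0 : (0 : α) ∈ S) (hmaps : MapsTo g S S)
    (hodd : ∀ x ∈ S, g (-x) = -g x) {k : ℕ} {x : α} (hx : x ∈ symmPeriodicPts S g k) (n : ℕ) :
    g^[n] x = -x ↔ k ∣ n ∧ Odd (n / k) := by
  obtain ⟨hxS, hper, hk⟩ := hx
  have hx0 := ne_zero_of_mem_symmPeriodicPts h0 hodd ⟨hxS, hper, hk⟩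
  have hk0 := pos_of_iterate_eq_neg hx0 hk
  rw [← Nat.mod_two_mul_eq_self_iff hk0, ← iterate_mod_minimalPeriod_eq, hper]
  constructor
  · intro hmod
    have := two_mul_eq_minimalPeriod hmaps hodd hxS hx0 hmod (hper ▸ Nat.mod_lt n (by omega))
    omega
  · intro hmod
    rwa [hmod]

theorem orbit_neg_invariant_iff (hmaps : MapsTo g S S) (hodd : ∀ x ∈ S, g (-x) = -g x)
    {x : α} (hx : x ∈ S) (hx0 : x ≠ 0) {k : ℕ} (hper : minimalPeriod g x = 2 * k) :
    (∀ y, (∃ a, g^[a] x = y) ↔ ∃ a, g^[a] x = -y) ↔ g^[k] x = -x := by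
  constructor
  · intro h
    obtain ⟨a, ha⟩ := (h x).mp ⟨0, rfl⟩
    obtain ⟨k', hxS, hper', hk'⟩ := exists_mem_symmPeriodicPts hmaps hodd hx hx0 ha
    obtain rfl : k' = k := by omega
    exact hk'
  · intro hk
    have hneg : ∀ y, (∃ a, g^[a] x = y) → ∃ a, g^[a] x = -y := by
      rintro _ ⟨a, rfl⟩
      exact ⟨a + k, by rw [iterate_add_apply, hk, iterate_neg_of_odd hmaps hodd a hx]⟩
    exact fun y => ⟨hneg y, fun h => by simpa using hneg _ h⟩

theorem setOf_eq_symmPeriodicPts (h0 : (0 : α) ∈ S) (hmaps : MapsTo g S S)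
    (hodd : ∀ x ∈ S, g (-x) = -g x) {m : ℕ} (hm : 0 < m) :
    {x | x ∈ S ∧ g^[2 * m] x = x ∧ (∀ j : ℕ, 0 < j → j < 2 * m → g^[j] x ≠ x) ∧
        ∀ y, (∃ k : ℕ, g^[k] x = y) ↔ ∃ k : ℕ, g^[k] x = -y} = symmPeriodicPts S g m := by
  ext x
  refine and_congr_right fun hx => ?_
  have hmin : (g^[2 * m] x = x ∧ ∀ j : ℕ, 0 < j → j < 2 * m → g^[j] x ≠ x) ↔
      minimalPeriod g x = 2 * m :=
    (minimalPeriod_eq_iff_of_pos (by omega)).symm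
  rw [← and_assoc, hmin]
  refine and_congr_right fun hper => orbit_neg_invariant_iff hmaps hodd hx ?_ hper
  rintro rfl
  rw [minimalPeriod_zero_eq_one h0 hodd] at hper
  omega

theorem iterateNegPts_eq_insert_biUnion (h0 : (0 : α) ∈ S) (hmaps : MapsTo g S S)
    (hodd : ∀ x ∈ S, g (-x) = -g x) {m : ℕ} (hm : m ≠ 0) :
    iterateNegPts S g m =
      insert 0 (⋃ k ∈ m.divisors.filter (fun k => Odd (m / k)), symmPeriodicPts S g k) := by
  ext x
  simp only [mem_insert_iff, mem_iUnion, Finset.mem_filter, Nat.mem_divisors, exists_prop]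
  constructor
  · rintro ⟨hx, hxm⟩
    by_cases hx0 : x = 0
    · exact Or.inl hx0
    obtain ⟨k, hk⟩ := exists_mem_symmPeriodicPts hmaps hodd hx hx0 hxm
    obtain ⟨hdvd, hodd_div⟩ := (iterate_eq_neg_iff_dvd_and_odd_div h0 hmaps hodd hk m).mp hxm
    exact Or.inr ⟨k, ⟨⟨hdvd, hm⟩, hodd_div⟩, hk⟩
  · rintro (rfl | ⟨k, ⟨⟨hdvd, -⟩, hodd_div⟩, hk⟩)
    · exact ⟨h0, by rw [iterate_fixed (map_zero_of_odd h0 hodd), neg_zero]⟩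
    · exact ⟨hk.1, (iterate_eq_neg_iff_dvd_and_odd_div h0 hmaps hodd hk m).mpr ⟨hdvd, hodd_div⟩⟩

theorem ncard_iterateNegPts (h0 : (0 : α) ∈ S) (hmaps : MapsTo g S S)
    (hodd : ∀ x ∈ S, g (-x) = -g x) (hfin : ∀ n, 0 < n → (iterateNegPts S g n).Finite)
    {m : ℕ} (hm : 0 < m) :
    (iterateNegPts S g m).ncard =
      ∑ k ∈ m.divisors.filter (fun k => Odd (m / k)), (symmPeriodicPts S g k).ncard + 1 := by
  set D := m.divisors.filter (fun k => Odd (m / k))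
  have hfinT : ∀ k ∈ D, (symmPeriodicPts S g k).Finite := fun k hk =>
    (hfin k (Nat.pos_of_mem_divisors (Finset.mem_filter.mp hk).1)).subset
      fun x hx => ⟨hx.1, hx.2.2⟩
  have hdisj : (D : Set ℕ).PairwiseDisjoint (symmPeriodicPts S g) := fun a _ b _ hab =>
    disjoint_left.mpr fun x hxa hxb => hab (by have := hxa.2.1; have := hxb.2.1; omega)
  have h0U : (0 : α) ∉ ⋃ k ∈ D, symmPeriodicPts S g k := by
    simp only [mem_iUnion, not_exists]
    exact fun k _ hk => ne_zero_of_mem_symmPeriodicPts h0 hodd hk rfl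
  rw [iterateNegPts_eq_insert_biUnion h0 hmaps hodd hm.ne',
    ncard_insert_of_notMem h0U (D.finite_toSet.biUnion hfinT), ← finsum_mem_coe_finset,
    ← D.finite_toSet.ncard_biUnion hfinT hdisj]
  rfl

end OddMap

theorem statement2_general (S : Set ℝ) (h0 : (0 : ℝ) ∈ S)
    (g : ℝ → ℝ) (hmaps : ∀ x ∈ S, g x ∈ S)
    (hodd : ∀ x ∈ S, g (-x) = - g x)
    (hfin : ∀ m : ℕ, 0 < m → {x : ℝ | x ∈ S ∧ g^[m] x = -x}.Finite)
    (ψ : ℕ → ℤ)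
    (hψ : ∀ m : ℕ, 0 < m → ψ m = ({x : ℝ | x ∈ S ∧ g^[m] x = -x}.ncard : ℤ))
    (m : ℕ) (hm : 0 < m) :
    ({x : ℝ | x ∈ S ∧ g^[2 * m] x = x ∧
        (∀ j : ℕ, 0 < j → j < 2 * m → g^[j] x ≠ x) ∧
        (∀ y : ℝ, (∃ k : ℕ, g^[k] x = y) ↔ (∃ k : ℕ, g^[k] x = -y))}.ncard : ℤ)
      = Phi2 m ψ := by
  have hcount : ∀ n > 0, ∑ k ∈ n.divisors.filter (fun k => Odd (n / k)),
      ((symmPeriodicPts S g k).ncard : ℤ) = ψ n - 1 := by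
    intro n hn
    rw [hψ n hn, eq_sub_iff_add_eq]
    exact_mod_cast (ncard_iterateNegPts h0 hmaps hodd hfin hn).symm
  obtain ⟨a, q, hq, rfl⟩ := Nat.exists_eq_two_pow_mul_odd hm.ne'
  rw [setOf_eq_symmPeriodicPts h0 hmaps hodd hm,
    apply_two_pow_mul_eq_sum_moebius_smul hcount a hq, Phi2_two_pow_mul a hq]
  simp only [smul_eq_mul]

/-- For an odd map `g` on a symmetric set `S ⊆ ℝ` containing `0`, the number of symmetric
periodic points of `g` with least period `2m` equals `Φ₂(m, ψ)`, where `ψ(m)` is the number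
of solutions of `g^m(x) = -x` in `S`. -/
theorem statement2 (S : Set ℝ) (h0 : (0 : ℝ) ∈ S)
    (hS : ∀ x : ℝ, x ∈ S ↔ -x ∈ S)
    (g : ℝ → ℝ) (hmaps : ∀ x ∈ S, g x ∈ S)
    (hodd : ∀ x ∈ S, g (-x) = - g x)
    (hfin : ∀ m : ℕ, 0 < m → {x : ℝ | x ∈ S ∧ g^[m] x = -x}.Finite)
    (ψ : ℕ → ℤ)
    (hψ : ∀ m : ℕ, 0 < m → ψ m = ({x : ℝ | x ∈ S ∧ g^[m] x = -x}.ncard : ℤ))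
    (m : ℕ) (hm : 0 < m) :
    ({x : ℝ | x ∈ S ∧ g^[2 * m] x = x ∧
        (∀ j : ℕ, 0 < j → j < 2 * m → g^[j] x ≠ x) ∧
        (∀ y : ℝ, (∃ k : ℕ, g^[k] x = y) ↔ (∃ k : ℕ, g^[k] x = -y))}.ncard : ℤ)
      = Phi2 m ψ :=
  statement2_general S h0 g hmaps hodd hfin ψ hψ m hm
end

section
/- Let f : [1,4] → [1,4] be the continuous map with f(1) = f(3) = 4, f(2) = 1, f(4) = 2, and f affine on each of the intervals [1,2], [2,3], [3,4]. Then for every positive integer k, the set {x ∈ [1,4] : f^k(x) = x} is finite and has exactly a_{3,k} elements. -/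
/-- `f` is affine (linear interpolation between its endpoint values) on `[a, b]`. -/
def AffOn (f : ℝ → ℝ) (a b : ℝ) : Prop :=
  ∀ x ∈ Set.Icc a b, f x = f a + (x - a) * (f b - f a) / (b - a)

/-!
Code a point of `[1, 4]` by the pieces `[1, 2]`, `[2, 3]`, `[3, 4]` visited by its orbit. The map
sends the first two pieces onto `[1, 4]` and the third onto `[2, 4]`, so codes are cyclic walks in
the graph on three vertices in which only the edge `[3, 4] → [1, 2]` is missing. Since `f` expands
distances at least twofold on each piece, a point of period `k` is determined by its code;
conversely, composing inverse branches along a cyclic walk gives a self-map of a piece whose fixed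
point has that walk as its code. The only delicate points are the boundary points `2` and `3`: the
first lies on the cycle `2 → 1 → 4 → 2` and can only be coded by `[2, 3]`, the second is not
periodic. Cyclic walks of length `k` are counted by `tr T^k` for the transition matrix `T`, and
`T^3 = 3 T^2 - T` gives the recurrence of `a_{3,k}`.
-/

open Set Function
open scoped Finset

namespace Matrix

variable {ι R : Type*} [Fintype ι] [DecidableEq ι] [CommSemiring R]

theorem pow_succ_apply_eq_sum_prod (M : Matrix ι ι R) (n : ℕ) (i j : ι) :
    (M ^ (n + 1)) i j =
      ∑ s : Fin n → ι, ∏ t : Fin (n + 1),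
        M ((Fin.cons i s : Fin (n + 1) → ι) t) ((Fin.snoc s j : Fin (n + 1) → ι) t) := by
  induction n generalizing i with
  | zero => simp [Fin.snoc]
  | succ n ih =>
    rw [pow_succ', mul_apply, ← (Fin.consEquiv fun _ => ι).sum_comp, Fintype.sum_prod_type]
    refine Finset.sum_congr rfl fun l _ => ?_
    simp [ih, Finset.mul_sum, Fin.prod_univ_succ, Fin.consEquiv, ← Fin.cons_snoc_eq_snoc_cons]

theorem trace_pow_succ_eq_sum_prod (M : Matrix ι ι R) (n : ℕ) :
    trace (M ^ (n + 1)) = ∑ w : Fin (n + 1) → ι, ∏ t, M (w t) (w (t + 1)) := by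
  rw [trace, ← (Fin.consEquiv fun _ => ι).sum_comp, Fintype.sum_prod_type]
  refine Finset.sum_congr rfl fun i _ => ?_
  rw [diag_apply, pow_succ_apply_eq_sum_prod]
  refine Finset.sum_congr rfl fun s _ => Finset.prod_congr rfl fun t _ => ?_
  congr 1
  induction t using Fin.lastCases with
  | last => simp [Fin.consEquiv]
  | cast u => simp [Fin.consEquiv, Fin.coeSucc_eq_succ]

theorem trace_pow_succ_ite_eq_card (r : ι → ι → Prop) [DecidableRel r] (n : ℕ) :
    trace ((of fun i j => if r i j then (1 : R) else 0) ^ (n + 1)) =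
      #{w : Fin (n + 1) → ι | ∀ t, r (w t) (w (t + 1))} := by
  simp [trace_pow_succ_eq_sum_prod, Finset.prod_boole]

end Matrix

theorem eq_of_isPeriodicPt_of_expanding {X ι : Type*} [MetricSpace X] {f : X → X}
    {P : ι → Set X} {c : ℝ} (hc : 1 < c)
    (hexp : ∀ i, ∀ x ∈ P i, ∀ y ∈ P i, c * dist x y ≤ dist (f x) (f y))
    {k : ℕ} (hk : k ≠ 0) {x y : X} (hx : IsPeriodicPt f k x) (hy : IsPeriodicPt f k y)
    (σ : ℕ → ι) (hxσ : ∀ n < k, f^[n] x ∈ P (σ n)) (hyσ : ∀ n < k, f^[n] y ∈ P (σ n)) :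
    x = y := by
  have hgrowth : ∀ n ≤ k, c ^ n * dist x y ≤ dist (f^[n] x) (f^[n] y) := by
    intro n hn
    induction n with
    | zero => simp
    | succ n ih =>
      rw [iterate_succ_apply', iterate_succ_apply', pow_succ, mul_comm _ c, mul_assoc]
      calc c * (c ^ n * dist x y) ≤ c * dist (f^[n] x) (f^[n] y) := by
            gcongr; exact ih (by omega)
        _ ≤ _ := hexp _ _ (hxσ n (by omega)) _ (hyσ n (by omega))
  have hk' := hgrowth k le_rfl
  rw [hx.eq, hy.eq] at hk'
  have : 1 < c ^ k := one_lt_pow₀ hc hk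
  exact dist_le_zero.mp (by nlinarith [dist_nonneg (x := x) (y := y)])

namespace MarkovMap

def Transition (i j : Fin 3) : Prop := ¬(i = 2 ∧ j = 0)

instance : DecidableRel Transition := fun i j => inferInstanceAs (Decidable ¬(i = 2 ∧ j = 0))

def transitionMatrix : Matrix (Fin 3) (Fin 3) ℤ := .of fun i j => if Transition i j then 1 else 0

theorem transitionMatrix_pow_three :
    transitionMatrix ^ 3 = 3 • transitionMatrix ^ 2 - transitionMatrix := by
  decide

theorem trace_transitionMatrix_pow_add_three (n : ℕ) :
    (transitionMatrix ^ (n + 3)).trace =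
      3 * (transitionMatrix ^ (n + 2)).trace - (transitionMatrix ^ (n + 1)).trace := by
  rw [pow_add, transitionMatrix_pow_three, Matrix.mul_sub, Matrix.mul_smul, ← pow_add, ← pow_succ,
    Matrix.trace_sub, Matrix.trace_smul, nsmul_eq_mul, Nat.cast_ofNat]

theorem eq_trace_transitionMatrix_pow {a : ℕ → ℤ} (h1 : a 1 = 3) (h2 : a 2 = 7)
    (hrec : ∀ n, a (n + 3) = 3 * a (n + 2) - a (n + 1)) (n : ℕ) :
    a (n + 1) = (transitionMatrix ^ (n + 1)).trace := by
  induction n using Nat.twoStepInduction with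
  | zero => rw [h1]; decide
  | one => rw [h2]; decide
  | more n ih1 ih2 => rw [hrec, trace_transitionMatrix_pow_add_three, ih1, ih2]

def piece (i : Fin 3) : Set ℝ := Icc (i + 1) (i + 2)

def branch : Fin 3 → ℝ → ℝ := ![fun x => 7 - 3 * x, fun x => 3 * x - 5, fun x => 10 - 2 * x]

noncomputable def invBranch : Fin 3 → ℝ → ℝ :=
  ![fun y => (7 - y) / 3, fun y => (y + 5) / 3, fun y => (10 - y) / 2]

noncomputable def code (x : ℝ) : Fin 3 := if x < 2 then 0 else if x ≤ 3 then 1 else 2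

theorem branch_invBranch (i : Fin 3) (y : ℝ) : branch i (invBranch i y) = y := by
  fin_cases i <;> simp [branch, invBranch] <;> ring

theorem continuous_invBranch (i : Fin 3) : Continuous (invBranch i) := by
  fin_cases i <;> simp only [invBranch] <;> simp <;> fun_prop

theorem invBranch_mapsTo {i j : Fin 3} (h : Transition i j) :
    MapsTo (invBranch i) (piece j) (piece i) := by
  intro y hy
  fin_cases i <;> fin_cases j <;> (try exact absurd h (by decide)) <;>
    norm_num [piece, invBranch] at hy ⊢ <;> constructor <;> linarith [hy.1, hy.2]

theorem branch_mapsTo (i : Fin 3) : MapsTo (branch i) (piece i) (Icc 1 4) := by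
  intro x hx
  fin_cases i <;> norm_num [piece, branch] at hx ⊢ <;> constructor <;> linarith [hx.1, hx.2]

theorem two_mul_dist_le_dist_branch (i : Fin 3) (x y : ℝ) :
    2 * dist x y ≤ dist (branch i x) (branch i y) := by
  fin_cases i <;> simp [branch, Real.dist_eq, le_abs] <;>
    rcases abs_cases (x - y) with ⟨h, _⟩ | ⟨h, _⟩ <;> rw [h] <;>
    first | (left; linarith) | (right; linarith)

theorem piece_subset_Icc (i : Fin 3) : piece i ⊆ Icc 1 4 := by
  intro x hx
  fin_cases i <;> norm_num [piece] at hx ⊢ <;> constructor <;> linarith [hx.1, hx.2]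

theorem mem_piece_code {x : ℝ} (hx : x ∈ Icc 1 4) : x ∈ piece (code x) := by
  unfold code
  split_ifs <;> norm_num [piece] <;> constructor <;> linarith [hx.1, hx.2]

theorem code_eq_of_mem_piece {i : Fin 3} {x : ℝ} (hx : x ∈ piece i) (h2 : x = 2 → i ≠ 0)
    (h3 : x ≠ 3) : code x = i := by
  unfold code
  fin_cases i <;> norm_num [piece] at hx h2 <;> split_ifs <;> first | rfl | linarith | order

theorem code_eq_zero_iff {x : ℝ} : code x = 0 ↔ x < 2 := by
  unfold code; split_ifs <;> simp_all

theorem code_eq_two_iff {x : ℝ} : code x = 2 ↔ 3 < x := by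
  unfold code; split_ifs <;> simp_all; linarith

theorem eq_two_of_four_mem_piece {i : Fin 3} (h : (4 : ℝ) ∈ piece i) : i = 2 := by
  fin_cases i <;> norm_num [piece] at h; rfl

noncomputable def pullback (σ : ℕ → Fin 3) : ℕ → ℝ → ℝ
  | 0 => id
  | n + 1 => pullback σ n ∘ invBranch (σ n)

theorem continuous_pullback (σ : ℕ → Fin 3) (n : ℕ) : Continuous (pullback σ n) := by
  induction n with
  | zero => exact continuous_id
  | succ n ih => exact ih.comp (continuous_invBranch _)

noncomputable def itinerary (f : ℝ → ℝ) (k : ℕ) (x : ℝ) : Fin k → Fin 3 := fun t => code (f^[t] x)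

section

variable {f : ℝ → ℝ} (hf : ∀ i, EqOn f (branch i) (piece i))
include hf

theorem mapsTo_Icc : MapsTo f (Icc 1 4) (Icc 1 4) := fun x hx => by
  rw [hf _ (mem_piece_code hx)]
  exact branch_mapsTo _ (mem_piece_code hx)

theorem transition_code_apply {x : ℝ} (hx : x ∈ Icc 1 4) : Transition (code x) (code (f x)) := by
  rintro ⟨h2, h0⟩
  rw [code_eq_two_iff] at h2
  rw [code_eq_zero_iff, hf 2 (by norm_num [piece]; constructor <;> linarith [hx.2])] at h0
  simp [branch] at h0
  linarith [hx.2]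

theorem apply_one : f 1 = 4 := by rw [hf 0 (by norm_num [piece])]; simp [branch]; norm_num
theorem apply_two : f 2 = 1 := by rw [hf 0 (by norm_num [piece])]; simp [branch]; norm_num
theorem apply_three : f 3 = 4 := by rw [hf 2 (by norm_num [piece])]; simp [branch]; norm_num
theorem apply_four : f 4 = 2 := by rw [hf 2 (by norm_num [piece])]; simp [branch]; norm_num

theorem mapsTo_one_two_four : MapsTo f {1, 2, 4} {1, 2, 4} := by
  rintro x (rfl | rfl | rfl) <;> simp [apply_one hf, apply_two hf, apply_four hf]

theorem code_iterate_eq {k : ℕ} (hk : k ≠ 0) {x : ℝ} (hx : IsPeriodicPt f k x) {σ : ℕ → Fin 3}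
    (hσ : ∀ n, Transition (σ n) (σ (n + 1))) (hσk : Periodic σ k)
    (hmem : ∀ n, f^[n] x ∈ piece (σ n)) (n : ℕ) : code (f^[n] x) = σ n := by
  obtain ⟨m, rfl⟩ : ∃ m, k = m + 1 := ⟨k - 1, by omega⟩
  have horbit : ∀ y ∈ ({1, 2, 4} : Set ℝ), f^[m] y ∈ ({1, 2, 4} : Set ℝ) :=
    fun y hy => (mapsTo_one_two_four hf).iterate m hy
  have hreturn : ∀ l, f^[l + (m + 1)] x = f^[l] x := fun l => by
    rw [iterate_add_apply, hx.eq]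
  refine code_eq_of_mem_piece (hmem n) (fun h2 h0 => ?_) (fun h3 => ?_)
  · -- `f^[n + m] x` precedes `2` on its orbit, so it is `4`, which only `piece 2` contains.
    have hprev : f^[n + m] x ∈ ({1, 2, 4} : Set ℝ) := by
      rw [add_comm, iterate_add_apply, h2]; exact horbit 2 (by simp)
    have hprev_next : f (f^[n + m] x) = 2 := by
      rw [← iterate_succ_apply' f]
      show f^[n + (m + 1)] x = 2
      rw [hreturn, h2]
    have h4 : f^[n + m] x = 4 := by
      rcases hprev with h | h | h <;> rw [h] at hprev_next ⊢
      · rw [apply_one hf] at hprev_next; norm_num at hprev_next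
      · rw [apply_two hf] at hprev_next; norm_num at hprev_next
    have hσ2 : σ (n + m) = 2 := eq_two_of_four_mem_piece (h4 ▸ hmem (n + m))
    have h := hσ (n + m)
    rw [hσ2, add_assoc, hσk n, h0] at h
    exact h ⟨rfl, rfl⟩
  · have h := hreturn n
    rw [add_comm, iterate_add_apply, h3, iterate_succ_apply, apply_three hf] at h
    have := horbit 4 (by simp)
    rw [h] at this
    norm_num at this

theorem pullback_spec {σ : ℕ → Fin 3} (hσ : ∀ n, Transition (σ n) (σ (n + 1))) (n : ℕ) {y : ℝ}
    (hy : y ∈ piece (σ n)) :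
    (∀ l ≤ n, f^[l] (pullback σ n y) ∈ piece (σ l)) ∧ f^[n] (pullback σ n y) = y := by
  induction n generalizing y with
  | zero => exact ⟨fun l hl => by rwa [Nat.le_zero.mp hl], rfl⟩
  | succ n ih =>
    obtain ⟨hmem, hend⟩ := ih (y := invBranch (σ n) y) (invBranch_mapsTo (hσ n) hy)
    have hend' : f^[n + 1] (pullback σ (n + 1) y) = y := by
      rw [iterate_succ_apply']
      exact hend ▸ (hf _ (invBranch_mapsTo (hσ n) hy)).trans (branch_invBranch _ _)
    refine ⟨fun l hl => ?_, hend'⟩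
    rcases Nat.lt_succ_iff_lt_or_eq.mp (Nat.lt_succ_of_le hl) with hl | rfl
    · exact hmem l (by omega)
    · rwa [hend']

theorem exists_isPeriodicPt_mem_piece {k : ℕ} (hk : k ≠ 0) {σ : ℕ → Fin 3}
    (hσ : ∀ n, Transition (σ n) (σ (n + 1))) (hσk : Periodic σ k) :
    ∃ x, IsPeriodicPt f k x ∧ ∀ n, f^[n] x ∈ piece (σ n) := by
  have hmaps : MapsTo (pullback σ k) (piece (σ 0)) (piece (σ 0)) := fun y hy =>
    (pullback_spec hf hσ k (by rwa [hσk.eq])).1 0 (Nat.zero_le k)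
  obtain ⟨x, hx, hfix⟩ := exists_mem_Icc_isFixedPt_of_mapsTo
    (continuous_pullback σ k).continuousOn (by linarith) hmaps
  obtain ⟨hmem, hper⟩ := pullback_spec hf hσ k (y := x) (by rwa [hσk.eq])
  rw [hfix.eq] at hmem hper
  refine ⟨x, hper, fun n => ?_⟩
  rw [← IsPeriodicPt.iterate_mod_apply hper, ← hσk.map_mod_nat]
  exact hmem _ (Nat.mod_lt _ (Nat.pos_of_ne_zero hk)).le

theorem exists_isPeriodicPt_code_iterate_eq {k : ℕ} (hk : k ≠ 0) {σ : ℕ → Fin 3}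
    (hσ : ∀ n, Transition (σ n) (σ (n + 1))) (hσk : Periodic σ k) :
    ∃ x ∈ Icc 1 4, IsPeriodicPt f k x ∧ ∀ n, code (f^[n] x) = σ n := by
  obtain ⟨x, hx, hmem⟩ := exists_isPeriodicPt_mem_piece hf hk hσ hσk
  exact ⟨x, piece_subset_Icc _ (hmem 0), hx, code_iterate_eq hf hk hx hσ hσk hmem⟩

theorem eq_of_code_iterate_eq {k : ℕ} (hk : k ≠ 0) {x y : ℝ} (hx : x ∈ Icc 1 4) (hy : y ∈ Icc 1 4)
    (hxk : IsPeriodicPt f k x) (hyk : IsPeriodicPt f k y)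
    (hcode : ∀ n < k, code (f^[n] x) = code (f^[n] y)) : x = y := by
  have hexp : ∀ i, ∀ x ∈ piece i, ∀ y ∈ piece i, 2 * dist x y ≤ dist (f x) (f y) :=
    fun i u hu v hv => hf i hu ▸ hf i hv ▸ two_mul_dist_le_dist_branch i u v
  refine eq_of_isPeriodicPt_of_expanding one_lt_two hexp hk hxk hyk (fun n => code (f^[n] x))
    (fun n _ => mem_piece_code ((mapsTo_Icc hf).iterate n hx)) fun n hn => ?_
  rw [hcode n hn]
  exact mem_piece_code ((mapsTo_Icc hf).iterate n hy)

theorem bijOn_itinerary {k : ℕ} [NeZero k] :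
    BijOn (itinerary f k) {x ∈ Icc 1 4 | f^[k] x = x} {s | ∀ t, Transition (s t) (s (t + 1))} := by
  refine ⟨fun x ⟨hx, hxk⟩ t => ?_, fun x ⟨hx, hxk⟩ y ⟨hy, hyk⟩ hxy => ?_, fun s hs => ?_⟩
  · have hnext : (t + 1 : Fin k).val = (t.val + 1) % k := by simp [Fin.val_add]
    simp only [itinerary, hnext, IsPeriodicPt.iterate_mod_apply hxk, iterate_succ_apply']
    exact transition_code_apply hf ((mapsTo_Icc hf).iterate t hx)
  · exact eq_of_code_iterate_eq hf (NeZero.ne k) hx hy hxk hyk fun n hn => congrFun hxy ⟨n, hn⟩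
  · have hsucc (n : ℕ) : Fin.ofNat k (n + 1) = Fin.ofNat k n + 1 := by ext; simp [Fin.val_add]
    have hper : Periodic (fun n => s (Fin.ofNat k n)) k := fun n => congrArg s (by ext; simp)
    obtain ⟨x, hx, hxk, hcode⟩ := exists_isPeriodicPt_code_iterate_eq hf (NeZero.ne k)
      (fun n => by simpa only [hsucc] using hs (Fin.ofNat k n)) hper
    exact ⟨x, ⟨hx, hxk⟩, funext fun t => by simpa [itinerary] using hcode t⟩

end

theorem eqOn_branch_of_affOn {f : ℝ → ℝ} (hf1 : f 1 = 4) (hf3 : f 3 = 4) (hf2 : f 2 = 1)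
    (hf4 : f 4 = 2) (haff1 : AffOn f 1 2) (haff2 : AffOn f 2 3) (haff3 : AffOn f 3 4) :
    ∀ i, EqOn f (branch i) (piece i) := by
  intro i x hx
  fin_cases i <;> norm_num [piece] at hx
  · rw [haff1 x hx, hf1, hf2]; simp [branch]; ring
  · rw [haff2 x hx, hf2, hf3]; simp [branch]; ring
  · rw [haff3 x hx, hf3, hf4]; simp [branch]; ring

end MarkovMap

theorem statement4_general (f : ℝ → ℝ)
    (hf1 : f 1 = 4) (hf3 : f 3 = 4) (hf2 : f 2 = 1) (hf4 : f 4 = 2)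
    (haff1 : AffOn f 1 2) (haff2 : AffOn f 2 3) (haff3 : AffOn f 3 4)
    (a : ℕ → ℤ)
    (haLow : ∀ k : ℕ, 1 ≤ k → k ≤ 3 - 1 → a k = 2 ^ (k + 1) - 1)
    (haRec : ∀ k : ℕ, 3 ≤ k →
      a k = 3 * a (k - 1) - ∑ i ∈ Finset.Icc 2 (3 - 1), a (k - i))
    (k : ℕ) (hk : 0 < k) :
    {x ∈ Set.Icc (1 : ℝ) 4 | f^[k] x = x}.Finite ∧
      ({x ∈ Set.Icc (1 : ℝ) 4 | f^[k] x = x}.ncard : ℤ) = a k := by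
  obtain ⟨n, rfl⟩ : ∃ n, k = n + 1 := ⟨k - 1, by omega⟩
  have hbij := MarkovMap.bijOn_itinerary (k := n + 1)
    (MarkovMap.eqOn_branch_of_affOn hf1 hf3 hf2 hf4 haff1 haff2 haff3)
  refine ⟨hbij.finite_iff_finite.mpr (toFinite _), ?_⟩
  rw [hbij.ncard_eq, ncard_eq_toFinset_card', toFinset_ofPred, ← Matrix.trace_pow_succ_ite_eq_card]
  refine (MarkovMap.eq_trace_transitionMatrix_pow ?_ ?_ (fun m => ?_) n).symm
  · norm_num [haLow 1 le_rfl (by norm_num)]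
  · norm_num [haLow 2 (by norm_num) le_rfl]
  · simpa using haRec (m + 3) (by omega)

/-- For the continuous map `f : [1,4] → [1,4]` with `f(1) = f(3) = 4`, `f(2) = 1`,
`f(4) = 2`, affine on `[1,2]`, `[2,3]`, `[3,4]`, the set of fixed points of `f^k`
is finite with exactly `a_{3,k}` elements. -/
theorem statement4 (f : ℝ → ℝ)
    (hmaps : Set.MapsTo f (Set.Icc (1 : ℝ) 4) (Set.Icc (1 : ℝ) 4))
    (hcont : ContinuousOn f (Set.Icc (1 : ℝ) 4))
    (hf1 : f 1 = 4) (hf3 : f 3 = 4) (hf2 : f 2 = 1) (hf4 : f 4 = 2)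
    (haff1 : AffOn f 1 2) (haff2 : AffOn f 2 3) (haff3 : AffOn f 3 4)
    (a : ℕ → ℤ)
    (haLow : ∀ k : ℕ, 1 ≤ k → k ≤ 3 - 1 → a k = 2 ^ (k + 1) - 1)
    (haRec : ∀ k : ℕ, 3 ≤ k →
      a k = 3 * a (k - 1) - ∑ i ∈ Finset.Icc 2 (3 - 1), a (k - i))
    (k : ℕ) (hk : 0 < k) :
    {x ∈ Set.Icc (1 : ℝ) 4 | f^[k] x = x}.Finite ∧
      ({x ∈ Set.Icc (1 : ℝ) 4 | f^[k] x = x}.ncard : ℤ) = a k :=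
  statement4_general f hf1 hf3 hf2 hf4 haff1 haff2 haff3 a haLow haRec k hk
end

section
/- For every integer n ≥ 3, the generating function of the sequence a_{n,k} is (3z − Σ_{k=2}^{n−1} k·z^k) / (1 − 3z + Σ_{k=2}^{n−1} z^k); that is, as formal power series over ℤ, (1 − 3z + Σ_{k=2}^{n−1} z^k) · (Σ_{k≥1} a_{n,k} z^k) = 3z − Σ_{k=2}^{n−1} k·z^k. -/
/-!
Compare coefficients of `z^m`. With `a_0 := 0`, the product has coefficient
`a_m - 3 a_{m-1} + ∑_{i=2}^{n-1} a_{m-i}`. For `m ≥ n` it vanishes by the recurrence. For `m < n`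
only initial values occur, and the geometric sum `∑_{j=1}^{t} (2^{j+1} - 1) = 2^{t+2} - t - 4`
makes it `-m` (and `3` for `m = 1`).
-/

open PowerSeries

section
variable {R : Type*}

-- For `k > m` the truncated index `m - k` is `0`, where `b` vanishes.
theorem coeff_X_pow_mul_mk_of_apply_zero [Semiring R] {b : ℕ → R} (hb : b 0 = 0) (k m : ℕ) :
    coeff m (X ^ k * mk b) = b (m - k) := by
  rw [coeff_X_pow_mul', coeff_mk]
  split_ifs with h
  · rfl
  · rw [Nat.sub_eq_zero_of_le (by omega), hb]

variable [CommRing R]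

theorem coeff_one_sub_C_mul_X_add_sum_X_pow_mul_mk {b : ℕ → R} (hb : b 0 = 0) (c : R)
    (s : Finset ℕ) (m : ℕ) :
    coeff m ((1 - C c * X + ∑ k ∈ s, X ^ k) * mk b) =
      b m - c * b (m - 1) + ∑ k ∈ s, b (m - k) := by
  have hX : coeff m (X * mk b) = b (m - 1) := by
    rw [← pow_one X, coeff_X_pow_mul_mk_of_apply_zero hb]
  simp only [add_mul, sub_mul, one_mul, Finset.sum_mul, mul_assoc, map_add, map_sub, map_sum,
    coeff_C_mul, coeff_mk, hX, coeff_X_pow_mul_mk_of_apply_zero hb]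

theorem coeff_C_mul_X_sub_sum_C_mul_X_pow (c : R) (s : Finset ℕ) (m : ℕ) :
    coeff m (C c * X - ∑ k ∈ s, C (k : R) * X ^ k) =
      (if m = 1 then c else 0) - if m ∈ s then (m : R) else 0 := by
  simp only [map_sub, map_sum, coeff_C_mul, coeff_X, coeff_X_pow, mul_ite, mul_one, mul_zero,
    Finset.sum_ite_eq]

end

theorem sum_Icc_apply_sub_eq {M : Type*} [AddCommMonoid M] {b : ℕ → M} (hb : b 0 = 0) {m N : ℕ}
    (hm : m ≤ N + 1) : ∑ k ∈ Finset.Icc 2 N, b (m - k) = ∑ j ∈ Finset.Icc 1 (m - 2), b j := by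
  rw [← Finset.sum_subset (Finset.Icc_subset_Icc_right (by omega : m - 1 ≤ N))]
  · refine Finset.sum_nbij' (fun k => m - k) (fun j => m - j) ?_ ?_ ?_ ?_ (fun _ _ => rfl) <;>
      intro k hk <;> simp only [Finset.mem_Icc] at hk ⊢ <;> omega
  · intro k hk hk'
    simp only [Finset.mem_Icc] at hk hk'
    rw [Nat.sub_eq_zero_of_le (by omega), hb]

theorem sum_Icc_two_pow_succ_sub_one (t : ℕ) :
    ∑ j ∈ Finset.Icc 1 t, ((2 : ℤ) ^ (j + 1) - 1) = 2 ^ (t + 2) - t - 4 := by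
  induction t with
  | zero => simp
  | succ t ih =>
    rw [Finset.sum_Icc_succ_top (by omega), ih]
    push_cast
    ring

theorem sub_three_mul_add_sum_apply_sub_of_le {b : ℕ → ℤ} (hb : b 0 = 0) {N : ℕ}
    (hlow : ∀ j, 1 ≤ j → j ≤ N → b j = 2 ^ (j + 1) - 1) {m : ℕ} (hm : m ≤ N) :
    b m - 3 * b (m - 1) + ∑ k ∈ Finset.Icc 2 N, b (m - k) =
      (if m = 1 then 3 else 0) - if m ∈ Finset.Icc 2 N then (m : ℤ) else 0 := by
  have hsum : ∑ k ∈ Finset.Icc 2 N, b (m - k) = 2 ^ (m - 2 + 2) - (m - 2 : ℕ) - 4 := by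
    rw [sum_Icc_apply_sub_eq hb (by omega), ← sum_Icc_two_pow_succ_sub_one]
    exact Finset.sum_congr rfl fun j hj => by
      rw [Finset.mem_Icc] at hj
      exact hlow j hj.1 (by omega)
  rw [hsum]
  rcases Nat.lt_or_ge m 2 with hm2 | hm2
  · interval_cases m
    · simp [hb]
    · simp [hb, hlow 1 le_rfl hm]
  · obtain ⟨i, rfl⟩ : ∃ i, m = i + 2 := ⟨m - 2, by omega⟩
    rw [hlow (i + 2) (by omega) hm, show i + 2 - 1 = i + 1 by omega,
      hlow (i + 1) (by omega) (by omega), if_neg (by omega),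
      if_pos (Finset.mem_Icc.mpr ⟨hm2, hm⟩), Nat.add_sub_cancel]
    push_cast
    ring

/-- For `n ≥ 3`, the generating function of `a_{n,k}` is
`(3z - ∑_{k=2}^{n-1} k z^k) / (1 - 3z + ∑_{k=2}^{n-1} z^k)`. -/
theorem statement7 (n : ℕ) (hn : 3 ≤ n) (a : ℕ → ℤ)
    (haLow : ∀ k : ℕ, 1 ≤ k → k ≤ n - 1 → a k = 2 ^ (k + 1) - 1)
    (haRec : ∀ k : ℕ, n ≤ k →
      a k = 3 * a (k - 1) - ∑ i ∈ Finset.Icc 2 (n - 1), a (k - i)) :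
    ((1 : PowerSeries ℤ) - PowerSeries.C (3 : ℤ) * PowerSeries.X
        + ∑ k ∈ Finset.Icc 2 (n - 1), PowerSeries.X ^ k) *
      (PowerSeries.mk fun k => if k = 0 then 0 else a k)
    = PowerSeries.C (3 : ℤ) * PowerSeries.X
        - ∑ k ∈ Finset.Icc 2 (n - 1), PowerSeries.C (k : ℤ) * PowerSeries.X ^ k := by
  set b : ℕ → ℤ := fun k => if k = 0 then 0 else a k
  have hb : b 0 = 0 := if_pos rfl
  have hba : ∀ j, 1 ≤ j → b j = a j := fun j hj => if_neg (by omega)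
  ext m
  rw [coeff_one_sub_C_mul_X_add_sum_X_pow_mul_mk hb, coeff_C_mul_X_sub_sum_C_mul_X_pow]
  rcases le_or_gt m (n - 1) with hm | hm
  · exact sub_three_mul_add_sum_apply_sub_of_le hb
      (fun j hj hjN => (hba j hj).trans (haLow j hj hjN)) hm
  · have hsum : ∑ k ∈ Finset.Icc 2 (n - 1), b (m - k) = ∑ k ∈ Finset.Icc 2 (n - 1), a (m - k) :=
      Finset.sum_congr rfl fun k hk => hba _ (by rw [Finset.mem_Icc] at hk; omega)
    rw [hsum, hba m (by omega), hba (m - 1) (by omega), haRec m (by omega), if_neg (by omega),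
      if_neg (by rw [Finset.mem_Icc]; omega)]
    ring
end

section
/- For every integer n ≥ 1, the generating function of the sequence b_{n,k} is (z + Σ_{k=2}^{2n} (−1)^k k·z^k) / (1 − z − Σ_{k=2}^{2n} (−1)^k z^k); that is, as formal power series over ℤ, (1 − z − Σ_{k=2}^{2n} (−1)^k z^k) · (Σ_{k≥1} b_{n,k} z^k) = z + Σ_{k=2}^{2n} (−1)^k k·z^k. -/
/-!
Multiplying by the unit `1 + z` turns the denominator into `1 - 2z² - z^(2n+1)` and the numerator
into `z + 3z² + ∑_{k=3}^{2n} (-1)^k z^k + 2n z^(2n+1)`, so the claim amounts to the low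
coefficients `b_1, …, b_{2n+1}` together with the reduced recurrence
`b_k = 2 b_{k-2} + b_{k-2n-1}` for `k ≥ 2n + 2`.
Since `(1 - z²)(1 - 3z² + ∑_{i=2}^{2n} z^(2i)) = (1 - 2z² - z^(2n+1))(1 - 2z² + z^(2n+1))`, the given
recurrence forces the defect `c_k = b_k - 2 b_{k-2} - b_{k-2n-1}` to satisfy
`c_k = 2 c_{k-2} - c_{k-2n-1}` for `k ≥ 4n + 3`; hence it suffices to check `c_k = 0` for `2n + 2 ≤ k ≤ 4n + 2`,
which is a computation with the explicit initial values.
-/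

open Finset

section CommRing

variable {R : Type*} [CommRing R] (x : R)

theorem one_add_mul_sum_Icc_neg_one_pow {M : ℕ} (hM : 2 ≤ M) :
    (1 + x) * ∑ k ∈ Icc 2 M, (-1) ^ k * x ^ k = x ^ 2 + (-1) ^ M * x ^ (M + 1) := by
  induction M, hM using Nat.le_induction with
  | base => simp; ring
  | succ M hM ih => rw [sum_Icc_succ_top (by omega), mul_add, ih]; ring

theorem one_add_mul_sum_Icc_neg_one_pow_mul {M : ℕ} (hM : 2 ≤ M) :
    (1 + x) * ∑ k ∈ Icc 2 M, (-1) ^ k * (k : R) * x ^ k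
      = 2 * x ^ 2 + ∑ k ∈ Icc 3 M, (-1) ^ k * x ^ k + (-1) ^ M * (M : R) * x ^ (M + 1) := by
  induction M, hM using Nat.le_induction with
  | base => simp; ring
  | succ M hM ih =>
    rw [sum_Icc_succ_top (by omega), mul_add, ih, sum_Icc_succ_top (by omega)]
    push_cast
    ring

end CommRing

theorem sum_Icc_two_eq_sum_range_reflect {β : Type*} [AddCommMonoid β] {M : ℕ} (g : ℕ → β) :
    ∑ i ∈ Icc 2 M, g i = ∑ t ∈ range (M - 1), g (M - t) := by
  refine sum_nbij' (fun i => M - i) (fun t => M - t) ?_ ?_ ?_ ?_ ?_ <;>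
    intro a ha <;> simp only [mem_Icc, mem_range] at * <;>
    first | omega | (congr 1; omega)

theorem sum_Icc_two_sub_succ {β : Type*} [AddCommGroup β] {M : ℕ} (hM : 1 ≤ M) (g : ℕ → β) :
    ∑ i ∈ Icc 2 M, (g i - g (i + 1)) = g 2 - g (M + 1) := by
  induction M, hM using Nat.le_induction with
  | base => simp
  | succ M hM ih =>
    rw [sum_Icc_succ_top (by omega), ih]
    abel

theorem sum_range_two_pow_mul_add (c : ℤ) (N : ℕ) :
    ∑ t ∈ range N, (2 : ℤ) ^ t * (2 * t + c) = 2 ^ N * (2 * N + c - 4) - (c - 4) := by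
  induction N with
  | zero => simp
  | succ N ih => rw [sum_range_succ, ih]; push_cast; ring

theorem sum_range_two_pow_add_two_sub_one (N : ℕ) :
    ∑ t ∈ range N, ((2 : ℤ) ^ (t + 2) - 1) = 2 ^ (N + 2) - 4 - N := by
  induction N with
  | zero => simp
  | succ N ih => rw [sum_range_succ, ih]; push_cast; ring

open PowerSeries

/-- With `f 0 = 0`, the truncated subtractions `m - 2` and `m - (M + 1)` read the missing terms
as zero. -/
theorem PowerSeries.coeff_one_sub_two_mul_X_sq_sub_X_pow_mul_mk {R : Type*} [CommRing R] (M : ℕ)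
    {f : ℕ → R} (hf : f 0 = 0) (m : ℕ) :
    coeff m ((1 - 2 * X ^ 2 - X ^ (M + 1)) * mk f) = f m - 2 * f (m - 2) - f (m - (M + 1)) := by
  rw [sub_mul, sub_mul, one_mul, mul_assoc, map_sub, map_sub, coeff_X_pow_mul', ← map_ofNat C 2,
    coeff_C_mul, coeff_X_pow_mul', coeff_mk, coeff_mk, coeff_mk]
  split_ifs <;> simp_all [Nat.sub_eq_zero_of_le, le_of_lt]

def SatisfiesRecurrence (M K : ℕ) (b : ℕ → ℤ) : Prop :=
  ∀ k, K ≤ k → b k = 3 * b (k - 2) - ∑ i ∈ Icc 2 M, b (k - 2 * i)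

namespace SatisfiesRecurrence

variable {M K : ℕ} {b : ℕ → ℤ}

theorem eq_four_mul_sub (hrec : SatisfiesRecurrence M K b) (hM : 1 ≤ M) {k : ℕ}
    (hk : K + 2 ≤ k) (hkM : 2 * M + 2 ≤ k) :
    b k = 4 * b (k - 2) - 4 * b (k - 4) + b (k - (2 * M + 2)) := by
  -- subtracting the recurrence at `k - 2` telescopes the sum
  have htel := sum_Icc_two_sub_succ hM fun i => b (k - 2 * i)
  have hshift : ∀ i ∈ Icc 2 M, b (k - 2 * (i + 1)) = b (k - 2 - 2 * i) := fun i _ => by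
    congr 1; omega
  rw [sum_sub_distrib, sum_congr rfl hshift] at htel
  rw [show k - 2 * 2 = k - 4 by omega, show k - 2 * (M + 1) = k - (2 * M + 2) by omega] at htel
  have h₀ := hrec k (by omega)
  have h₁ := hrec (k - 2) (by omega)
  rw [show k - 2 - 2 = k - 4 by omega] at h₁
  linarith

theorem eq_two_mul_add (hrec : SatisfiesRecurrence M K b) (hM : 1 ≤ M)
    (hK : 2 * M + 1 ≤ K)
    (hinit : ∀ k, M + 2 ≤ k → k ≤ K + 1 → b k = 2 * b (k - 2) + b (k - (M + 1))) :
    ∀ k, M + 2 ≤ k → b k = 2 * b (k - 2) + b (k - (M + 1)) := by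
  intro k
  induction k using Nat.strong_induction_on with
  | _ k ih =>
  intro hk
  rcases le_or_gt k (K + 1) with hkK | hkK
  · exact hinit k hk hkK
  have h₀ := hrec.eq_four_mul_sub hM (k := k) (by omega) (by omega)
  have h₁ := ih (k - 2) (by omega) (by omega)
  have h₂ := ih (k - (M + 1)) (by omega) (by omega)
  rw [show k - 2 - 2 = k - 4 by omega, show k - 2 - (M + 1) = k - (M + 1) - 2 by omega] at h₁
  rw [show k - (M + 1) - (M + 1) = k - (2 * M + 2) by omega] at h₂
  linarith

end SatisfiesRecurrence

structure InitialValues (n : ℕ) (b : ℕ → ℤ) : Prop where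
  odd_low : ∀ k, 1 ≤ k → k ≤ n → b (2 * k - 1) = 1
  odd_high : ∀ k, n + 1 ≤ k → k ≤ 2 * n →
    b (2 * k - 1) = 2 ^ (k - n - 1) * (2 * (k : ℤ) - 1) + 1
  even : ∀ k, 1 ≤ k → k ≤ 2 * n → b (2 * k) = 2 ^ (k + 1) - 1

namespace InitialValues

variable {n : ℕ} {b : ℕ → ℤ}

theorem eq_two_mul_add_of_le (hb : InitialValues n b) :
    ∀ k, 2 * n + 2 ≤ k → k ≤ 4 * n → b k = 2 * b (k - 2) + b (k - (2 * n + 1)) := by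
  intro k hk hk'
  obtain ⟨s, rfl | rfl⟩ := Nat.even_or_odd' k
  · rw [show 2 * s - 2 = 2 * (s - 1) by omega,
      show 2 * s - (2 * n + 1) = 2 * (s - n) - 1 by omega,
      hb.even s (by omega) (by omega), hb.even (s - 1) (by omega) (by omega),
      hb.odd_low (s - n) (by omega) (by omega), show s - 1 + 1 = s by omega, pow_succ]
    ring
  · rw [show 2 * s + 1 = 2 * (s + 1) - 1 by omega, show 2 * (s + 1) - 1 - 2 = 2 * s - 1 by omega,
      show 2 * (s + 1) - 1 - (2 * n + 1) = 2 * (s - n) by omega,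
      hb.odd_high (s + 1) (by omega) (by omega), hb.odd_high s (by omega) (by omega),
      hb.even (s - n) (by omega) (by omega), show s + 1 - n - 1 = s - n - 1 + 1 by omega,
      show s - n = s - n - 1 + 1 by omega]
    push_cast
    ring

theorem sum_odd (hb : InitialValues n b) (hn : 1 ≤ n) :
    ∑ i ∈ Icc 2 (2 * n), b (4 * n + 1 - 2 * i) = 2 ^ (n - 1) * (4 * n - 5) + 2 := by
  have hlow : ∀ t ∈ range n, b (2 * t + 1) = 1 := fun t ht => by
    rw [← hb.odd_low (t + 1) (by omega) (by simp only [mem_range] at ht; omega)]; congr 1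
  have hhigh : ∀ t ∈ range (n - 1), b (2 * (n + t) + 1) = 2 ^ t * (2 * t + (2 * n + 1)) + 1 :=
    fun t ht => by
      rw [show 2 * (n + t) + 1 = 2 * (n + t + 1) - 1 by omega,
        hb.odd_high (n + t + 1) (by omega) (by simp only [mem_range] at ht; omega),
        show n + t + 1 - n - 1 = t by omega]
      push_cast; ring
  have hreflect : ∀ t ∈ range (2 * n - 1), b (4 * n + 1 - 2 * (2 * n - t)) = b (2 * t + 1) :=
    fun t ht => by simp only [mem_range] at ht; congr 1; omega
  rw [sum_Icc_two_eq_sum_range_reflect, sum_congr rfl hreflect,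
    show 2 * n - 1 = n + (n - 1) by omega, sum_range_add, sum_congr rfl hlow, sum_congr rfl hhigh,
    sum_add_distrib, sum_range_two_pow_mul_add]
  simp only [sum_const, card_range, nsmul_eq_mul, mul_one, Nat.cast_sub hn]
  push_cast
  ring

theorem sum_even (hb : InitialValues n b) (hn : 1 ≤ n) :
    ∑ i ∈ Icc 2 (2 * n), b (4 * n + 2 - 2 * i) = 2 ^ (2 * n + 1) - 4 - (2 * n - 1) := by
  have hvalues : ∀ t ∈ range (2 * n - 1), b (4 * n + 2 - 2 * (2 * n - t)) = 2 ^ (t + 2) - 1 :=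
    fun t ht => by
      simp only [mem_range] at ht
      rw [show 4 * n + 2 - 2 * (2 * n - t) = 2 * (t + 1) by omega,
        hb.even (t + 1) (by omega) (by omega)]
  rw [sum_Icc_two_eq_sum_range_reflect, sum_congr rfl hvalues, sum_range_two_pow_add_two_sub_one,
    show 2 * n - 1 + 2 = 2 * n + 1 by omega, Nat.cast_sub (by omega)]
  push_cast
  ring

theorem eq_two_mul_add_of_le_succ_succ (hb : InitialValues n b) (hn : 1 ≤ n)
    (hrec : SatisfiesRecurrence (2 * n) (4 * n + 1) b) :
    ∀ k, 2 * n + 2 ≤ k → k ≤ 4 * n + 2 → b k = 2 * b (k - 2) + b (k - (2 * n + 1)) := by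
  intro k hk hk'
  obtain hk' | rfl | rfl : k ≤ 4 * n ∨ k = 4 * n + 1 ∨ k = 4 * n + 2 := by omega
  · exact hb.eq_two_mul_add_of_le k hk hk'
  · have hpow : (2 : ℤ) ^ (n + 1) = 4 * 2 ^ (n - 1) := by
      rw [show n + 1 = n - 1 + 2 by omega, pow_add]; ring
    rw [hrec _ le_rfl, hb.sum_odd hn, show 4 * n + 1 - (2 * n + 1) = 2 * n by omega,
      show 4 * n + 1 - 2 = 2 * (2 * n) - 1 by omega, hb.odd_high (2 * n) (by omega) le_rfl,
      hb.even n hn (by omega), show 2 * n - n - 1 = n - 1 by omega, hpow]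
    push_cast
    ring
  · rw [hrec _ (by omega), hb.sum_even hn,
      show 4 * n + 2 - (2 * n + 1) = 2 * (n + 1) - 1 by omega,
      show 4 * n + 2 - 2 = 2 * (2 * n) by omega, hb.even (2 * n) (by omega) le_rfl,
      hb.odd_high (n + 1) (by omega) (by omega), show n + 1 - n - 1 = 0 by omega]
    push_cast
    ring

theorem sub_two_mul_eq_neg_one_pow (hb : InitialValues n b) {m : ℕ} (hm : 3 ≤ m)
    (hm' : m ≤ 2 * n) :
    b m - 2 * b (m - 2) = (-1) ^ m := by
  obtain ⟨s, rfl | rfl⟩ := Nat.even_or_odd' m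
  · rw [show 2 * s - 2 = 2 * (s - 1) by omega, hb.even s (by omega) (by omega),
      hb.even (s - 1) (by omega) (by omega), show s = s - 1 + 1 by omega, pow_mul]
    simp only [Nat.add_sub_cancel, pow_succ]
    ring
  · rw [show 2 * s + 1 - 2 = 2 * s - 1 by omega, hb.odd_low s (by omega) (by omega),
      show 2 * s + 1 = 2 * (s + 1) - 1 by omega, hb.odd_low (s + 1) (by omega) (by omega),
      show 2 * (s + 1) - 1 = 2 * s + 1 by omega, pow_succ, pow_mul]
    norm_num

theorem one_sub_two_mul_X_sq_sub_X_pow_mul_mk_eq (hb : InitialValues n b) (hn : 1 ≤ n)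
    (hred : ∀ k, 2 * n + 2 ≤ k → b k = 2 * b (k - 2) + b (k - (2 * n + 1))) :
    (1 - 2 * X ^ 2 - X ^ (2 * n + 1)) * PowerSeries.mk (fun k => if k = 0 then 0 else b k)
      = X + C 3 * X ^ 2 + ∑ k ∈ Icc 3 (2 * n), C ((-1) ^ k) * X ^ k
        + C (2 * n : ℤ) * X ^ (2 * n + 1) := by
  ext m
  rw [coeff_one_sub_two_mul_X_sq_sub_X_pow_mul_mk (2 * n) (by simp)]
  simp only [map_add, coeff_X, coeff_C_mul_X_pow, map_sum, sum_ite_eq, mem_Icc]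
  obtain rfl | rfl | rfl | hm | rfl | hm : m = 0 ∨ m = 1 ∨ m = 2 ∨ (3 ≤ m ∧ m ≤ 2 * n) ∨
      m = 2 * n + 1 ∨ 2 * n + 2 ≤ m := by omega
  · simp
  · have hb₁ := hb.odd_low 1 le_rfl hn
    norm_num at hb₁
    simp (disch := omega) only [if_pos, if_neg, ↓reduceIte]
    linarith
  · have hb₂ := hb.even 1 le_rfl (by omega)
    norm_num at hb₂
    simp (disch := omega) only [if_pos, if_neg, ↓reduceIte]
    linarith
  · have := hb.sub_two_mul_eq_neg_one_pow hm.1 hm.2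
    simp (disch := omega) only [if_pos, if_neg]
    linarith
  · have hb₁ := hb.odd_low n hn le_rfl
    have hb₂ := hb.odd_high (n + 1) le_rfl (by omega)
    rw [show 2 * (n + 1) - 1 = 2 * n + 1 by omega, show n + 1 - n - 1 = 0 by omega] at hb₂
    rw [show 2 * n + 1 - 2 = 2 * n - 1 by omega]
    push_cast at hb₂
    simp (disch := omega) only [if_pos, if_neg, ↓reduceIte]
    linarith
  · have := hred m hm
    simp (disch := omega) only [if_neg]
    linarith

end InitialValues

/-- For `n ≥ 1`, the generating function of `b_{n,k}` is
`(z + ∑_{k=2}^{2n} (-1)^k k z^k) / (1 - z - ∑_{k=2}^{2n} (-1)^k z^k)`. -/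
theorem statement10 (n : ℕ) (hn : 1 ≤ n) (b : ℕ → ℤ)
    (hb1 : ∀ k : ℕ, 1 ≤ k → k ≤ n → b (2 * k - 1) = 1)
    (hb2 : ∀ k : ℕ, n + 1 ≤ k → k ≤ 2 * n →
      b (2 * k - 1) = 2 ^ (k - n - 1) * (2 * (k : ℤ) - 1) + 1)
    (hb3 : ∀ k : ℕ, 1 ≤ k → k ≤ 2 * n → b (2 * k) = 2 ^ (k + 1) - 1)
    (hbRec : ∀ k : ℕ, 4 * n + 1 ≤ k →
      b k = 3 * b (k - 2) - ∑ i ∈ Finset.Icc 2 (2 * n), b (k - 2 * i)) :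
    ((1 : PowerSeries ℤ) - PowerSeries.X
        - ∑ k ∈ Finset.Icc 2 (2 * n), PowerSeries.C (R := ℤ) ((-1) ^ k) * PowerSeries.X ^ k) *
      (PowerSeries.mk fun k => if k = 0 then 0 else b k)
    = PowerSeries.X
        + ∑ k ∈ Finset.Icc 2 (2 * n),
            PowerSeries.C (R := ℤ) ((-1) ^ k * (k : ℤ)) * PowerSeries.X ^ k := by
  have hb : InitialValues n b := ⟨hb1, hb2, hb3⟩
  have hrec : SatisfiesRecurrence (2 * n) (4 * n + 1) b := hbRec
  have hred := hrec.eq_two_mul_add (by omega) (by omega) (hb.eq_two_mul_add_of_le_succ_succ hn hrec)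
  have hA := hb.one_sub_two_mul_X_sq_sub_X_pow_mul_mk_eq hn hred
  have hden := one_add_mul_sum_Icc_neg_one_pow (X : ℤ⟦X⟧) (M := 2 * n) (by omega)
  have hnum := one_add_mul_sum_Icc_neg_one_pow_mul (X : ℤ⟦X⟧) (M := 2 * n) (by omega)
  rw [(even_two_mul n).neg_one_pow] at hden hnum
  simp only [map_mul, map_pow, map_neg, map_one, map_natCast, map_ofNat, Nat.cast_mul,
    Nat.cast_ofNat] at hA hnum ⊢
  refine (isUnit_iff_constantCoeff.mpr (by simp) : IsUnit (1 + X : ℤ⟦X⟧)).mul_left_cancel ?_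
  linear_combination (-PowerSeries.mk fun k => if k = 0 then 0 else b k) * hden + hA - hnum
end

section
/- For integers n ≥ 2, 2 ≤ j ≤ 2n+1, and 2 ≤ m ≤ 2n+1, the generating function of the sequence c_{j,m,n,k} is {(2n+1)z − 2[2n − (j−m)]z² − 3(j−m)z³} / {1 − (2n+1)z + [2n − (j−m)]z² + (j−m)z³}; that is, as formal power series over ℤ, (1 − (2n+1)z + [2n − (j−m)]z² + (j−m)z³) · (Σ_{k≥1} c_{j,m,n,k} z^k) = (2n+1)z − 2[2n − (j−m)]z² − 3(j−m)z³. -/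
open PowerSeries

theorem PowerSeries.cubic_mul_mk_of_recurrence {R : Type*} [CommRing R] (a b e : R) (s : ℕ → R)
    (hs : ∀ k, s (k + 4) = a * s (k + 3) - b * s (k + 2) - e * s (k + 1)) :
    (1 - C a * X + C b * X ^ 2 + C e * X ^ 3) * mk s
      = C (s 0) + C (s 1 - a * s 0) * X + C (s 2 - a * s 1 + b * s 0) * X ^ 2
        + C (s 3 - a * s 2 + b * s 1 + e * s 0) * X ^ 3 := by
  have hexpand : (1 - C a * X + C b * X ^ 2 + C e * X ^ 3) * mk s
      = mk s - C a * (mk s * X ^ 1) + C b * (mk s * X ^ 2) + C e * (mk s * X ^ 3) := by ring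
  rw [hexpand]
  ext k
  simp only [map_add, map_sub, coeff_C_mul, coeff_mul_X_pow', coeff_C, coeff_mk]
  match k with
  | 0 | 1 | 2 | 3 => simp
  | k + 4 => simp [hs]; ring

theorem statement13_general (n : ℕ) (j m : ℤ)
    (c : ℕ → ℤ)
    (hc1 : c 1 = 2 * (n : ℤ) + 1)
    (hc2 : c 2 = (2 * (n : ℤ) + 1) ^ 2 - 2 * (2 * (n : ℤ) - (j - m)))
    (hc3 : c 3 = (2 * (n : ℤ) + 1) ^ 3 - 6 * (n : ℤ) * (2 * (n : ℤ) + 1 - (j - m)))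
    (hcRec : ∀ k : ℕ, 4 ≤ k →
      c k = (2 * (n : ℤ) + 1) * c (k - 1) - (2 * (n : ℤ) - (j - m)) * c (k - 2)
              - (j - m) * c (k - 3)) :
    ((1 : PowerSeries ℤ) - PowerSeries.C (2 * (n : ℤ) + 1) * PowerSeries.X
        + PowerSeries.C (2 * (n : ℤ) - (j - m)) * PowerSeries.X ^ 2
        + PowerSeries.C (j - m) * PowerSeries.X ^ 3) *
      (PowerSeries.mk fun k => if k = 0 then 0 else c k)
    = PowerSeries.C (2 * (n : ℤ) + 1) * PowerSeries.X
        - PowerSeries.C (2 * (2 * (n : ℤ) - (j - m))) * PowerSeries.X ^ 2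
        - PowerSeries.C (3 * (j - m)) * PowerSeries.X ^ 3 := by
  rw [cubic_mul_mk_of_recurrence]
  · simp only [↓reduceIte, OfNat.ofNat_ne_zero, one_ne_zero, hc1, hc2, hc3,
      mul_zero, sub_zero, add_zero, map_zero, zero_add, map_add, map_sub, map_mul, map_pow,
      map_natCast, map_ofNat, map_one]
    ring
  · intro k
    simpa using hcRec (k + 4) (by omega)

/-- For `n ≥ 2`, `2 ≤ j ≤ 2n+1`, `2 ≤ m ≤ 2n+1`, the generating function of `c_{j,m,n,k}`
is `{(2n+1)z - 2[2n-(j-m)]z² - 3(j-m)z³} / {1 - (2n+1)z + [2n-(j-m)]z² + (j-m)z³}`. -/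
theorem statement13 (n : ℕ) (hn : 2 ≤ n) (j m : ℤ)
    (hj1 : 2 ≤ j) (hj2 : j ≤ 2 * (n : ℤ) + 1)
    (hm1 : 2 ≤ m) (hm2 : m ≤ 2 * (n : ℤ) + 1)
    (c : ℕ → ℤ)
    (hc1 : c 1 = 2 * (n : ℤ) + 1)
    (hc2 : c 2 = (2 * (n : ℤ) + 1) ^ 2 - 2 * (2 * (n : ℤ) - (j - m)))
    (hc3 : c 3 = (2 * (n : ℤ) + 1) ^ 3 - 6 * (n : ℤ) * (2 * (n : ℤ) + 1 - (j - m)))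
    (hcRec : ∀ k : ℕ, 4 ≤ k →
      c k = (2 * (n : ℤ) + 1) * c (k - 1) - (2 * (n : ℤ) - (j - m)) * c (k - 2)
              - (j - m) * c (k - 3)) :
    ((1 : PowerSeries ℤ) - PowerSeries.C (2 * (n : ℤ) + 1) * PowerSeries.X
        + PowerSeries.C (2 * (n : ℤ) - (j - m)) * PowerSeries.X ^ 2
        + PowerSeries.C (j - m) * PowerSeries.X ^ 3) *
      (PowerSeries.mk fun k => if k = 0 then 0 else c k)
    = PowerSeries.C (2 * (n : ℤ) + 1) * PowerSeries.X
        - PowerSeries.C (2 * (2 * (n : ℤ) - (j - m))) * PowerSeries.X ^ 2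
        - PowerSeries.C (3 * (j - m)) * PowerSeries.X ^ 3 :=
  statement13_general n j m c hc1 hc2 hc3 hcRec
end

section
/- For every integer n ≥ 2 and every positive integer k, c_{2,2n+1,n,k} = (2n−1)^k + 2; consequently this sequence satisfies c_{2,2n+1,n,k+1} = (2n−1)·c_{2,2n+1,n,k} − 4(n−1) for all positive integers k. -/
/-! The recurrence has characteristic polynomial `(X - 1) ^ 2 * (X - (2n - 1))`, so every
sequence `(2n - 1) ^ k + b` satisfies it, and the given initial values single out `b = 2`. -/

theorem eq_pow_add_of_recurrence {R : Type*} [CommRing R] {a b : R} {c : ℕ → R}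
    (h1 : c 1 = a + b) (h2 : c 2 = a ^ 2 + b) (h3 : c 3 = a ^ 3 + b)
    (hrec : ∀ k, c (k + 4) = (a + 2) * c (k + 3) - (2 * a + 1) * c (k + 2) + a * c (k + 1))
    (k : ℕ) : c (k + 1) = a ^ (k + 1) + b := by
  suffices h : ∀ k, c (k + 1) = a ^ (k + 1) + b ∧ c (k + 2) = a ^ (k + 2) + b ∧
      c (k + 3) = a ^ (k + 3) + b from (h k).1
  intro k
  induction k with
  | zero => exact ⟨by simpa using h1, h2, h3⟩
  | succ k ih =>
    obtain ⟨e1, e2, e3⟩ := ih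
    refine ⟨e2, e3, ?_⟩
    rw [hrec, e1, e2, e3]
    ring

theorem statement14_general (n : ℕ) (c : ℕ → ℤ)
    (hc1 : c 1 = 2 * (n : ℤ) + 1)
    (hc2 : c 2 = (2 * (n : ℤ) + 1) ^ 2 - 2 * (2 * (n : ℤ) - (1 - 2 * (n : ℤ))))
    (hc3 : c 3 = (2 * (n : ℤ) + 1) ^ 3
        - 6 * (n : ℤ) * (2 * (n : ℤ) + 1 - (1 - 2 * (n : ℤ))))
    (hcRec : ∀ k : ℕ, 4 ≤ k →
      c k = (2 * (n : ℤ) + 1) * c (k - 1)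
              - (2 * (n : ℤ) - (1 - 2 * (n : ℤ))) * c (k - 2)
              - (1 - 2 * (n : ℤ)) * c (k - 3)) :
    (∀ k : ℕ, 1 ≤ k → c k = (2 * (n : ℤ) - 1) ^ k + 2) ∧
      (∀ k : ℕ, 1 ≤ k → c (k + 1) = (2 * (n : ℤ) - 1) * c k - 4 * ((n : ℤ) - 1)) := by
  have hc : ∀ k, c (k + 1) = (2 * (n : ℤ) - 1) ^ (k + 1) + 2 :=
    eq_pow_add_of_recurrence (by rw [hc1]; ring) (by rw [hc2]; ring) (by rw [hc3]; ring)
      fun k => by rw [hcRec (k + 4) (by omega)]; simp only [Nat.reduceSubDiff]; ring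
  refine ⟨fun k hk => ?_, fun k hk => ?_⟩ <;> obtain ⟨k, rfl⟩ := Nat.exists_eq_add_of_le' hk
  · exact hc k
  · rw [hc, hc]
    ring

/-- For `n ≥ 2`, taking `j = 2` and `m = 2n+1` (so `j - m = 1 - 2n`) in the definition of
`c_{j,m,n,k}`, we have `c_{2,2n+1,n,k} = (2n-1)^k + 2`, and consequently
`c_{2,2n+1,n,k+1} = (2n-1)·c_{2,2n+1,n,k} - 4(n-1)` for all positive integers `k`. -/
theorem statement14 (n : ℕ) (hn : 2 ≤ n) (c : ℕ → ℤ)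
    (hc1 : c 1 = 2 * (n : ℤ) + 1)
    (hc2 : c 2 = (2 * (n : ℤ) + 1) ^ 2 - 2 * (2 * (n : ℤ) - (1 - 2 * (n : ℤ))))
    (hc3 : c 3 = (2 * (n : ℤ) + 1) ^ 3
        - 6 * (n : ℤ) * (2 * (n : ℤ) + 1 - (1 - 2 * (n : ℤ))))
    (hcRec : ∀ k : ℕ, 4 ≤ k →
      c k = (2 * (n : ℤ) + 1) * c (k - 1)
              - (2 * (n : ℤ) - (1 - 2 * (n : ℤ))) * c (k - 2)
              - (1 - 2 * (n : ℤ)) * c (k - 3)) :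
    (∀ k : ℕ, 1 ≤ k → c k = (2 * (n : ℤ) - 1) ^ k + 2) ∧
      (∀ k : ℕ, 1 ≤ k → c (k + 1) = (2 * (n : ℤ) - 1) * c k - 4 * ((n : ℤ) - 1)) :=
  statement14_general n c hc1 hc2 hc3 hcRec
end

section
/- For integers n ≥ 2 and 1−n ≤ m ≤ n, and every positive integer k, Φ₁(k, φ_{d_{m,n}}) ≡ 0 (mod k), where φ_{d_{m,n}}(k) = d_{m,n,k}. -/
/-!
Writing `x, y` for the roots of `X² - n X - m`, `d_k = x ^ k + y ^ k` is the Lucas sequence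
`V_k(n, -m)`. For `k = p ^ (v + 1) * t` with `p ∤ t`, the only divisors of `k` with `μ ≠ 0` are
`j` and `p * j` with `j ∣ t`, so `Φ₁(k, V)` is a combination of the differences
`V_{p^(v+1) t/j} - V_{p^v t/j}`, and it suffices to prove the Euler congruences
`p ^ (r + 1) ∣ V_{p^(r+1) t} - V_{p^r t}`. These follow by induction on `r` from
`V_{ab}(s, q) = V_a(V_b(s, q), q ^ b)` and `V_p(s, q) = s ^ p + p W(s, q)` with `W` an integer
polynomial, which make `V_p` turn congruences modulo `p ^ r` into congruences modulo `p ^ (r + 1)`.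
-/

open scoped Classical

section LucasV

variable {A B : Type*} [CommRing A] [CommRing B]

def lucasV (s q : A) : ℕ → A
  | 0 => 2
  | 1 => s
  | k + 2 => s * lucasV s q (k + 1) - q * lucasV s q k

@[simp] theorem lucasV_zero (s q : A) : lucasV s q 0 = 2 := rfl

@[simp] theorem lucasV_one (s q : A) : lucasV s q 1 = s := rfl

theorem lucasV_add_two (s q : A) (k : ℕ) :
    lucasV s q (k + 2) = s * lucasV s q (k + 1) - q * lucasV s q k := rfl

theorem map_lucasV (f : A →+* B) (s q : A) (k : ℕ) :
    f (lucasV s q k) = lucasV (f s) (f q) k := by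
  induction k using Nat.twoStepInduction with
  | zero => exact map_ofNat f 2
  | one => rfl
  | more k ih₁ ih₂ => simp [lucasV_add_two, ih₁, ih₂]

theorem lucasV_add_mul (x y : A) (k : ℕ) : lucasV (x + y) (x * y) k = x ^ k + y ^ k := by
  induction k using Nat.twoStepInduction with
  | zero => rw [lucasV_zero, pow_zero, pow_zero, one_add_one_eq_two]
  | one => simp
  | more k ih₁ ih₂ => rw [lucasV_add_two, ih₁, ih₂]; ring

end LucasV

section SplittingRing

open Polynomial

variable {A : Type*} [CommRing A] (s q : A)

/-- Adjoining a root `x` of `X² - s X + q` splits it as `(X - x) (X - y)` with `y = s - x`. -/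
abbrev quadraticSplitting : Type _ := AdjoinRoot (X ^ 2 - C s * X + C q)

theorem quadraticSplitting_algebraMap_injective [IsDomain A] :
    Function.Injective (algebraMap A (quadraticSplitting s q)) := by
  have hdeg : (X ^ 2 - C s * X + C q).degree = 2 := by compute_degree!
  exact AdjoinRoot.of.injective_of_degree_ne_zero (by rw [hdeg]; exact two_ne_zero)

theorem quadraticSplitting_root_mul :
    AdjoinRoot.root _ * (algebraMap A _ s - AdjoinRoot.root _) =
      algebraMap A (quadraticSplitting s q) q := by
  have hroot := AdjoinRoot.eval₂_root (X ^ 2 - C s * X + C q)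
  simp only [eval₂_add, eval₂_sub, eval₂_mul, eval₂_pow, eval₂_X, eval₂_C,
    ← AdjoinRoot.algebraMap_eq] at hroot
  linear_combination -hroot

theorem algebraMap_lucasV_quadraticSplitting (k : ℕ) :
    algebraMap A (quadraticSplitting s q) (lucasV s q k) =
      AdjoinRoot.root _ ^ k + (algebraMap A _ s - AdjoinRoot.root _) ^ k := by
  rw [map_lucasV, ← lucasV_add_mul, add_sub_cancel, quadraticSplitting_root_mul]

theorem lucasV_mul [IsDomain A] (a b : ℕ) :
    lucasV s q (a * b) = lucasV (lucasV s q b) (q ^ b) a := by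
  apply quadraticSplitting_algebraMap_injective s q
  rw [algebraMap_lucasV_quadraticSplitting, map_lucasV, algebraMap_lucasV_quadraticSplitting,
    map_pow, ← quadraticSplitting_root_mul, mul_pow, lucasV_add_mul, ← pow_mul, ← pow_mul,
    mul_comm b a]

theorem lucasV_prime_of_charP [IsDomain A] (p : ℕ) [Fact p.Prime] [CharP A p] :
    lucasV s q p = s ^ p := by
  have hinj := quadraticSplitting_algebraMap_injective s q
  have := charP_of_injective_algebraMap hinj p
  apply hinj
  rw [algebraMap_lucasV_quadraticSplitting, ← add_pow_char, add_sub_cancel, map_pow]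

end SplittingRing

theorem MvPolynomial.dvd_eval_sub_eval {R σ : Type*} [CommRing R] {c : R} {x y : σ → R}
    (h : ∀ i, c ∣ x i - y i) (f : MvPolynomial σ R) : c ∣ eval x f - eval y f := by
  induction f using MvPolynomial.induction_on with
  | C a => simp
  | add f g hf hg => simpa only [map_add, add_sub_add_comm] using dvd_add hf hg
  | mul_X f i hf =>
    rw [show eval x (f * X i) - eval y (f * X i) =
        (eval x f - eval y f) * x i + eval y f * (x i - y i) by simp only [map_mul, eval_X]; ring]
    exact dvd_add (dvd_mul_of_dvd_left hf _) (dvd_mul_of_dvd_right (h i) _)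

theorem pow_succ_dvd_pow_prime_sub_pow {R : Type*} [CommRing R] {p r : ℕ} {x y : R} (hr : r ≠ 0)
    (h : (p : R) ^ r ∣ x - y) : (p : R) ^ (r + 1) ∣ x ^ p - y ^ p := by
  rw [← geom_sum₂_mul, pow_succ']
  exact mul_dvd_mul (dvd_geom_sum₂_self ((dvd_pow_self _ hr).trans h)) h

section IntegerLucasV

variable {p : ℕ}

theorem exists_lucasV_prime_eq (hp : p.Prime) : ∃ W : MvPolynomial (Fin 2) ℤ,
    ∀ u v : ℤ, lucasV u v p = u ^ p + p * MvPolynomial.eval ![u, v] W := by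
  have := Fact.mk hp
  obtain ⟨W, hW⟩ : MvPolynomial.C (p : ℤ) ∣
      lucasV (.X 0 : MvPolynomial (Fin 2) ℤ) (.X 1) p - .X 0 ^ p := by
    rw [MvPolynomial.C_dvd_iff_map_hom_eq_zero (Int.castRingHom (ZMod p)) _
      (ZMod.intCast_zmod_eq_zero_iff_dvd · p), map_sub, map_pow, map_lucasV,
      MvPolynomial.map_X, MvPolynomial.map_X, lucasV_prime_of_charP, sub_self]
  refine ⟨W, fun u v => ?_⟩
  have := congrArg (MvPolynomial.eval ![u, v]) hW
  simp only [map_sub, map_pow, map_mul, map_lucasV, MvPolynomial.eval_X, MvPolynomial.eval_C,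
    Matrix.cons_val_zero, Matrix.cons_val_one, Matrix.cons_val_fin_one] at this
  linear_combination this

theorem prime_dvd_lucasV_prime_sub (hp : p.Prime) (u v : ℤ) : (p : ℤ) ∣ lucasV u v p - u := by
  obtain ⟨W, hW⟩ := exists_lucasV_prime_eq hp
  rw [hW, add_sub_right_comm]
  exact dvd_add (Int.prime_dvd_pow_self_sub hp u) (dvd_mul_right _ _)

theorem pow_succ_dvd_lucasV_prime_sub (hp : p.Prime) {r : ℕ} (hr : r ≠ 0) {u v u' v' : ℤ}
    (hu : (p : ℤ) ^ r ∣ u - u') (hv : (p : ℤ) ^ r ∣ v - v') :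
    (p : ℤ) ^ (r + 1) ∣ lucasV u v p - lucasV u' v' p := by
  obtain ⟨W, hW⟩ := exists_lucasV_prime_eq hp
  have hWuv : (p : ℤ) ^ r ∣ MvPolynomial.eval ![u, v] W - MvPolynomial.eval ![u', v'] W :=
    MvPolynomial.dvd_eval_sub_eval (fun i => by fin_cases i <;> simpa) W
  rw [hW, hW, add_sub_add_comm, ← mul_sub]
  exact dvd_add (pow_succ_dvd_pow_prime_sub_pow hr hu)
    (pow_succ' (p : ℤ) r ▸ mul_dvd_mul_left _ hWuv)

theorem pow_succ_dvd_lucasV_sub (hp : p.Prime) (s q : ℤ) (r t : ℕ) :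
    (p : ℤ) ^ (r + 1) ∣ lucasV s q (p ^ (r + 1) * t) - lucasV s q (p ^ r * t) := by
  induction r with
  | zero =>
    simpa only [zero_add, pow_one, pow_zero, one_mul, lucasV_mul] using
      prime_dvd_lucasV_prime_sub hp (lucasV s q t) (q ^ t)
  | succ r ih =>
    have hq : (p : ℤ) ^ (r + 1) ∣ q ^ (p ^ (r + 1) * t) - q ^ (p ^ r * t) := by
      have := dvd_sub_pow_of_dvd_sub (Int.prime_dvd_pow_self_sub hp (q ^ t)) r
      rwa [← pow_mul, ← pow_mul, ← pow_mul, ← pow_succ', mul_comm t, mul_comm t] at this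
    have hsucc (j : ℕ) : lucasV s q (p ^ (j + 1) * t) =
        lucasV (lucasV s q (p ^ j * t)) (q ^ (p ^ j * t)) p := by
      rw [pow_succ', mul_assoc, lucasV_mul]
    have := pow_succ_dvd_lucasV_prime_sub hp r.succ_ne_zero ih hq
    rwa [← hsucc, ← hsucc] at this

end IntegerLucasV

theorem Nat.Coprime.sum_divisors_mul_eq_sum_sum {M : Type*} [AddCommMonoid M] {m n : ℕ}
    (hmn : m.Coprime n) (f : ℕ → M) :
    ∑ e ∈ (m * n).divisors, f e = ∑ i ∈ m.divisors, ∑ j ∈ n.divisors, f (i * j) := by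
  rw [Nat.divisors_mul, Finset.mul_def, Finset.sum_image hmn.mul_injOn_divisors,
    Finset.sum_product]

open ArithmeticFunction
open scoped ArithmeticFunction.Moebius

theorem sum_moebius_mul_div_prime_pow_mul (a : ℕ → ℤ) {p v t : ℕ} (hp : p.Prime)
    (hpt : ¬p ∣ t) :
    ∑ e ∈ (p ^ (v + 1) * t).divisors, μ e * a (p ^ (v + 1) * t / e) =
      ∑ j ∈ t.divisors, μ j * (a (p ^ (v + 1) * (t / j)) - a (p ^ v * (t / j))) := by
  have hcop (i : ℕ) : (p ^ i).Coprime t := .pow_left _ (hp.coprime_iff_not_dvd.2 hpt)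
  have hμ (i j : ℕ) (hj : j ∈ t.divisors) : μ (p ^ i * j) = μ (p ^ i) * μ j :=
    isMultiplicative_moebius.map_mul_of_coprime
      ((hcop i).coprime_dvd_right (Nat.dvd_of_mem_divisors hj))
  rw [(hcop _).sum_divisors_mul_eq_sum_sum, Nat.sum_divisors_prime_pow hp, Finset.sum_range_succ',
    Finset.sum_range_succ', Finset.sum_eq_zero, zero_add, ← Finset.sum_add_distrib]
  · refine Finset.sum_congr rfl fun j hj => ?_
    have hjt := Nat.dvd_of_mem_divisors hj
    have hdiv : p ^ (v + 1) * t / (p * j) = p ^ v * (t / j) := by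
      rw [pow_succ', mul_assoc, Nat.mul_div_mul_left _ _ hp.pos, Nat.mul_div_assoc _ hjt]
    rw [hμ _ _ hj, hμ _ _ hj, zero_add, pow_one, pow_zero, one_mul, moebius_apply_prime hp,
      moebius_apply_one, hdiv, Nat.mul_div_assoc _ hjt]
    ring
  · intro i _
    refine Finset.sum_eq_zero fun j hj => ?_
    rw [hμ _ _ hj, moebius_apply_prime_pow hp (by omega), if_neg (by omega), zero_mul, zero_mul]

theorem dvd_sum_moebius_mul_div_of_pow_succ_dvd (a : ℕ → ℤ)
    (ha : ∀ p r t : ℕ, p.Prime → (p : ℤ) ^ (r + 1) ∣ a (p ^ (r + 1) * t) - a (p ^ r * t))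
    (k : ℕ) :
    (k : ℤ) ∣ ∑ e ∈ k.divisors, μ e * a (k / e) := by
  rcases eq_or_ne k 0 with rfl | hk
  · simp
  rw [Int.natCast_dvd, Nat.dvd_iff_prime_pow_dvd_dvd]
  intro p j hp hpj
  obtain ⟨v, t, hpt, rfl⟩ := Nat.exists_eq_pow_mul_and_not_dvd hk p hp.ne_one
  have hjv : p ^ j ∣ p ^ v :=
    (Nat.Coprime.pow_left j (hp.coprime_iff_not_dvd.2 hpt)).dvd_of_dvd_mul_right hpj
  refine hjv.trans (Int.natCast_dvd.1 ?_)
  rcases v with _ | v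
  · simp
  rw [sum_moebius_mul_div_prime_pow_mul a hp hpt, Nat.cast_pow]
  exact Finset.dvd_sum fun j _ => dvd_mul_of_dvd_right (ha p v (t / j) hp) _

theorem eq_lucasV_of_recurrence (n m : ℤ) (d : ℕ → ℤ) (hd1 : d 1 = n)
    (hd2 : d 2 = n ^ 2 + 2 * m)
    (hdRec : ∀ k : ℕ, 3 ≤ k → d k = n * d (k - 1) + m * d (k - 2)) (k : ℕ) :
    d (k + 1) = lucasV n (-m) (k + 1) := by
  suffices d (k + 1) = lucasV n (-m) (k + 1) ∧ d (k + 2) = lucasV n (-m) (k + 2) from this.1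
  induction k with
  | zero => exact ⟨hd1, by rw [hd2, lucasV_add_two, lucasV_one, lucasV_zero]; ring⟩
  | succ k ih =>
    refine ⟨ih.2, ?_⟩
    rw [hdRec (k + 3) (by omega), lucasV_add_two, show k + 3 - 1 = k + 2 from rfl,
      show k + 3 - 2 = k + 1 from rfl, ih.1, ih.2]
    ring

theorem statement15_general (n m : ℤ)
    (d : ℕ → ℤ)
    (hd1 : d 1 = n) (hd2 : d 2 = n ^ 2 + 2 * m)
    (hdRec : ∀ k : ℕ, 3 ≤ k → d k = n * d (k - 1) + m * d (k - 2))
    (k : ℕ) :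
    (k : ℤ) ∣ Phi1 k d := by
  have hd (e : ℕ) (he : e ∈ k.divisors) : d (k / e) = lucasV n (-m) (k / e) := by
    obtain ⟨j, hj⟩ := Nat.exists_eq_add_one_of_ne_zero (Nat.div_pos (Nat.divisor_le he)
      (Nat.pos_of_mem_divisors he)).ne'
    rw [hj, eq_lucasV_of_recurrence n m d hd1 hd2 hdRec]
  rw [Phi1, Finset.sum_filter_of_ne fun e _ h =>
      moebius_ne_zero_iff_squarefree.1 (left_ne_zero_of_mul h),
    Finset.sum_congr rfl fun e he => by rw [hd e he]]
  exact dvd_sum_moebius_mul_div_of_pow_succ_dvd _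
    (fun p r t hp => pow_succ_dvd_lucasV_sub hp n (-m) r t) k

/-- For integers `n ≥ 2`, `1 - n ≤ m ≤ n`, and the sequence `d_{m,n,k}`,
`Φ₁(k, d_{m,n}) ≡ 0 (mod k)`. -/
theorem statement15 (n m : ℤ) (hn : 2 ≤ n) (hm1 : 1 - n ≤ m) (hm2 : m ≤ n)
    (d : ℕ → ℤ)
    (hd1 : d 1 = n) (hd2 : d 2 = n ^ 2 + 2 * m)
    (hdRec : ∀ k : ℕ, 3 ≤ k → d k = n * d (k - 1) + m * d (k - 2))
    (k : ℕ) (hk : 0 < k) :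
    (k : ℤ) ∣ Phi1 k d :=
  statement15_general n m d hd1 hd2 hdRec k
end
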